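/- arXiv:1706.00986 — 9 statements merged into one kernel-verified Lean document; each statement's English description precedes it below -/
import Mathlib

section
/- Let H ∈ M_{M×N}(ℂ) be a partial complex Hadamard matrix and let K ∈ M_N(ℂ) be any matrix satisfying K·K* = N·1_N whose first M rows coincide with the rows of H. Then the ℝ-linear map A ↦ E given by E_{ij} = ∑_{k=1}^N H_{ik}·conj(K_{jk})·A_{ik} (for 1 ≤ i ≤ M, 1 ≤ j ≤ N) is a bijection from the real vector space {A ∈ M_{M×N}(ℝ) : ∑_{k=1}^N H_{ik}·conj(H_{jk})·(A_{ik} − A_{jk}) = 0 for all 1 ≤ i,j ≤ M} onto the real vector space {E ∈ M_{M×N}(ℂ) : E_{ij} = conj(E_{ji}) for all 1 ≤ i,j ≤ M, and (EK)_{ij}·conj(H_{ij}) ∈ ℝ for all 1 ≤ i ≤ M, 1 ≤ j ≤ N}, and its inverse is given by A_{ij} = (1/N)·(EK)_{ij}·conj(H_{ij}). -/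
/-!
Write `E = (H ⊙ A) Kᴴ`. Since a one-sided inverse of a square matrix is two-sided, `K Kᴴ = N·1`
gives `Kᴴ K = N·1`, hence `E K = N (H ⊙ A)`, and `|H_{ij}| = 1` turns this into
`A_{ij} = (EK)_{ij} conj(H_{ij}) / N`. This recovers `A` from `E`, and when the right-hand side
is real it defines a preimage of any `E`. Because the first `M` rows of `K` are those of `H`,
`E_{ij} - conj(E_{ji})` (for `i, j ≤ M`) is exactly the defect sum
`∑ₖ H_{ik} conj(H_{jk}) (A_{ik} - A_{jk})`, so the defect equations are the Hermitian condition.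
-/

open Matrix

section

variable {m n : Type*} [Fintype n]

def defectMap (H : Matrix m n ℂ) (K : Matrix n n ℂ) (A : Matrix m n ℝ) : Matrix m n ℂ :=
  of fun i j => ∑ k, H i k * star (K j k) * (A i k : ℂ)

def defectSpace (H : Matrix m n ℂ) : Set (Matrix m n ℝ) :=
  {A | ∀ i j, ∑ k, H i k * star (H j k) * ((A i k : ℂ) - (A j k : ℂ)) = 0}

open scoped ComplexOrder in
lemma conjTranspose_mul_self_eq_smul_one {𝕜 : Type*} [RCLike 𝕜] [DecidableEq n]
    {K : Matrix n n 𝕜} {c : 𝕜} (hK : K * Kᴴ = c • 1) : Kᴴ * K = c • 1 := by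
  rcases eq_or_ne c 0 with rfl | hc
  · rw [zero_smul, self_mul_conjTranspose_eq_zero] at hK
    simp [hK]
  · have h : K * (c⁻¹ • Kᴴ) = 1 := by
      rw [Matrix.mul_smul, hK, smul_smul, inv_mul_cancel₀ hc, one_smul]
    rw [← one_smul 𝕜 (Kᴴ * K), ← mul_inv_cancel₀ hc, ← smul_smul, ← Matrix.smul_mul,
      mul_eq_one_comm.mp h]

lemma mul_star_self_of_norm_eq_one {z : ℂ} (hz : ‖z‖ = 1) : z * star z = 1 := by
  rw [Complex.star_def, Complex.mul_conj', hz]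
  norm_num

variable (H : Matrix m n ℂ) (K : Matrix n n ℂ) (A : Matrix m n ℝ)

lemma defectMap_eq_hadamard_mul_conjTranspose :
    defectMap H K A = (H ⊙ A.map (↑)) * Kᴴ := by
  ext i j
  simp only [defectMap, of_apply, mul_apply, hadamard_apply, map_apply, conjTranspose_apply]
  exact Finset.sum_congr rfl fun k _ => by ring

lemma defectMap_apply_sub_star {e : m → n} (hKH : ∀ i k, K (e i) k = H i k) (i j : m) :
    defectMap H K A i (e j) - star (defectMap H K A j (e i)) =
      ∑ k, H i k * star (H j k) * ((A i k : ℂ) - (A j k : ℂ)) := by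
  simp only [defectMap, of_apply, hKH, star_sum, ← Finset.sum_sub_distrib, star_mul',
    Complex.star_def, Complex.conj_ofReal, Complex.conj_conj]
  exact Finset.sum_congr rfl fun k _ => by ring

variable [DecidableEq n] {c : ℝ}

lemma defectMap_mul (hK : K * Kᴴ = (c : ℂ) • 1) :
    defectMap H K A * K = (c : ℂ) • (H ⊙ A.map (↑)) := by
  rw [defectMap_eq_hadamard_mul_conjTranspose, Matrix.mul_assoc,
    conjTranspose_mul_self_eq_smul_one hK, Matrix.mul_smul, Matrix.mul_one]

lemma defectMap_mul_apply_mul_star (hK : K * Kᴴ = (c : ℂ) • 1) (hH : ∀ i j, ‖H i j‖ = 1)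
    (i : m) (j : n) : (defectMap H K A * K) i j * star (H i j) = c * A i j := by
  rw [defectMap_mul H K A hK, Matrix.smul_apply, hadamard_apply, map_apply, smul_eq_mul]
  linear_combination (c * A i j : ℂ) * mul_star_self_of_norm_eq_one (hH i j)

variable {H K} (hK : K * Kᴴ = (c : ℂ) • 1) (hH : ∀ i j, ‖H i j‖ = 1) (hc : c ≠ 0)
include hK hH hc

lemma eq_one_div_mul_defectMap_mul_apply_mul_star (i : m) (j : n) :
    (A i j : ℂ) = (1 / c) * ((defectMap H K A * K) i j * star (H i j)) := by
  rw [defectMap_mul_apply_mul_star H K A hK hH, one_div, inv_mul_cancel_left₀ (by exact_mod_cast hc)]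

lemma defectMap_injective : Function.Injective (defectMap H K) := by
  intro A A' h
  ext i j
  exact_mod_cast (eq_one_div_mul_defectMap_mul_apply_mul_star A hK hH hc i j).trans
    (h ▸ eq_one_div_mul_defectMap_mul_apply_mul_star A' hK hH hc i j).symm

lemma exists_defectMap_eq {E : Matrix m n ℂ}
    (hreal : ∀ i j, ∃ r : ℝ, (E * K) i j * star (H i j) = r) :
    ∃ A, defectMap H K A = E := by
  choose r hr using hreal
  refine ⟨c⁻¹ • of r, ?_⟩
  have hHA : H ⊙ (c⁻¹ • of r).map (↑) = (c : ℂ)⁻¹ • (E * K) := by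
    ext i k
    simp only [hadamard_apply, map_apply, Matrix.smul_apply, of_apply, smul_eq_mul,
      Complex.ofReal_mul, Complex.ofReal_inv, ← hr]
    linear_combination (c : ℂ)⁻¹ * (E * K) i k * mul_star_self_of_norm_eq_one (hH i k)
  rw [defectMap_eq_hadamard_mul_conjTranspose, hHA, Matrix.smul_mul, Matrix.mul_assoc, hK,
    Matrix.mul_smul, Matrix.mul_one, smul_smul, inv_mul_cancel₀ (by exact_mod_cast hc), one_smul]

theorem bijOn_defectMap {e : m → n} (hKH : ∀ i k, K (e i) k = H i k) :
    Set.BijOn (defectMap H K) (defectSpace H)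
      {E | (∀ i j, E i (e j) = star (E j (e i))) ∧
        ∀ i j, ∃ r : ℝ, (E * K) i j * star (H i j) = r} := by
  refine ⟨fun A hA => ⟨fun i j => ?_, fun i j => ⟨c * A i j, ?_⟩⟩,
    (defectMap_injective hK hH hc).injOn, fun E ⟨hherm, hreal⟩ => ?_⟩
  · rw [← sub_eq_zero, defectMap_apply_sub_star H K A hKH, hA i j]
  · push_cast
    exact defectMap_mul_apply_mul_star H K A hK hH i j
  · obtain ⟨A, rfl⟩ := exists_defectMap_eq hK hH hc hreal
    refine ⟨A, fun i j => ?_, rfl⟩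
    rw [← defectMap_apply_sub_star H K A hKH, hherm i j, sub_self]

end

theorem stmt_0_general (M N : ℕ) (hMN : M ≤ N)
    (H : Matrix (Fin M) (Fin N) ℂ)
    (hmod : ∀ i j, ‖H i j‖ = 1)
    (K : Matrix (Fin N) (Fin N) ℂ)
    (hK : K * K.conjTranspose = (N : ℂ) • (1 : Matrix (Fin N) (Fin N) ℂ))
    (hKH : ∀ (i : Fin M) (k : Fin N), K (Fin.castLE hMN i) k = H i k) :
    Set.BijOn
      (fun A : Matrix (Fin M) (Fin N) ℝ =>
        (Matrix.of fun i j => ∑ k, H i k * star (K j k) * (A i k : ℂ) :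
          Matrix (Fin M) (Fin N) ℂ))
      {A : Matrix (Fin M) (Fin N) ℝ |
        ∀ i j : Fin M, ∑ k, H i k * star (H j k) * ((A i k : ℂ) - (A j k : ℂ)) = 0}
      {E : Matrix (Fin M) (Fin N) ℂ |
        (∀ i j : Fin M, E i (Fin.castLE hMN j) = star (E j (Fin.castLE hMN i))) ∧
        (∀ (i : Fin M) (j : Fin N), ∃ r : ℝ, (E * K) i j * star (H i j) = (r : ℂ))} ∧
    (∀ A : Matrix (Fin M) (Fin N) ℝ,
      (∀ i j : Fin M, ∑ k, H i k * star (H j k) * ((A i k : ℂ) - (A j k : ℂ)) = 0) →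
      ∀ (i : Fin M) (j : Fin N),
        (A i j : ℂ) = (1 / (N : ℂ)) *
          (((Matrix.of fun i' j' => ∑ k, H i' k * star (K j' k) * (A i' k : ℂ)) * K) i j *
            star (H i j))) := by
  rcases isEmpty_or_nonempty (Fin M) with hM | ⟨⟨i₀⟩⟩
  · exact ⟨⟨fun _ _ => ⟨isEmptyElim, isEmptyElim⟩, fun _ _ _ _ _ => ext isEmptyElim,
      fun _ _ => ⟨0, isEmptyElim, ext isEmptyElim⟩⟩, fun _ _ => isEmptyElim⟩
  have hN : (N : ℝ) ≠ 0 := by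
    have := i₀.pos.trans_le hMN
    positivity
  rw [← Complex.ofReal_natCast] at hK ⊢
  exact ⟨bijOn_defectMap hK hmod hN hKH,
    fun A _ => eq_one_div_mul_defectMap_mul_apply_mul_star A hK hmod hN⟩

/-- the map `A ↦ E`, `E_{ij} = ∑_k H_{ik} conj(K_{jk}) A_{ik}`, is a bijection
between the defect space of the partial complex Hadamard matrix `H` and the space
`{E : E_{ij} = conj(E_{ji}) for i,j ≤ M, (EK)_{ij} conj(H_{ij}) ∈ ℝ}`, with inverse
`A_{ij} = (1/N) (EK)_{ij} conj(H_{ij})`. -/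
theorem stmt_0 (M N : ℕ) (hMN : M ≤ N)
    (H : Matrix (Fin M) (Fin N) ℂ)
    (hmod : ∀ i j, ‖H i j‖ = 1)
    (horth : ∀ i j : Fin M, ∑ k, H i k * star (H j k) = if i = j then (N : ℂ) else 0)
    (K : Matrix (Fin N) (Fin N) ℂ)
    (hK : K * K.conjTranspose = (N : ℂ) • (1 : Matrix (Fin N) (Fin N) ℂ))
    (hKH : ∀ (i : Fin M) (k : Fin N), K (Fin.castLE hMN i) k = H i k) :
    Set.BijOn
      (fun A : Matrix (Fin M) (Fin N) ℝ =>
        (Matrix.of fun i j => ∑ k, H i k * star (K j k) * (A i k : ℂ) :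
          Matrix (Fin M) (Fin N) ℂ))
      {A : Matrix (Fin M) (Fin N) ℝ |
        ∀ i j : Fin M, ∑ k, H i k * star (H j k) * ((A i k : ℂ) - (A j k : ℂ)) = 0}
      {E : Matrix (Fin M) (Fin N) ℂ |
        (∀ i j : Fin M, E i (Fin.castLE hMN j) = star (E j (Fin.castLE hMN i))) ∧
        (∀ (i : Fin M) (j : Fin N), ∃ r : ℝ, (E * K) i j * star (H i j) = (r : ℂ))} ∧
    (∀ A : Matrix (Fin M) (Fin N) ℝ,
      (∀ i j : Fin M, ∑ k, H i k * star (H j k) * ((A i k : ℂ) - (A j k : ℂ)) = 0) →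
      ∀ (i : Fin M) (j : Fin N),
        (A i j : ℂ) = (1 / (N : ℂ)) *
          (((Matrix.of fun i' j' => ∑ k, H i' k * star (K j' k) * (A i' k : ℂ)) * K) i j *
            star (H i j))) :=
  stmt_0_general M N hMN H hmod K hK hKH
end

section
/- For N ≥ 1, the defect of the Fourier matrix F_N equals ∑_{k=0}^{N−1} gcd(k,N) (where gcd(0,N) = N). Equivalently, this quantity equals the number of pairs (i,j) ∈ (ℤ/Nℤ)² with ij = 0 in ℤ/Nℤ (i.e. the number of entries of F_N equal to 1), and if N = p_1^{a_1}···p_s^{a_s} is the prime factorization of N, it equals N·∏_{i=1}^s (1 + a_i − a_i/p_i). -/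
noncomputable def defectSubmodule {I J : Type*} [Fintype I] [Fintype J]
    (H : Matrix I J ℂ) : Submodule ℝ (Matrix I J ℝ) where
  carrier := {A | ∀ i j, ∑ k, H i k * star (H j k) * ((A i k : ℂ) - (A j k : ℂ)) = 0}
  zero_mem' := by intro i j; simp
  add_mem' := by
    intro A B hA hB i j
    have h : ∀ k ∈ Finset.univ, H i k * star (H j k) * (((A + B) i k : ℂ) - (((A + B) j k : ℝ) : ℂ))
        = H i k * star (H j k) * ((A i k : ℂ) - (A j k : ℂ))
          + H i k * star (H j k) * ((B i k : ℂ) - (B j k : ℂ)) := by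
      intro k _
      simp only [Matrix.add_apply]
      push_cast
      ring
    rw [Finset.sum_congr rfl h, Finset.sum_add_distrib, hA i j, hB i j, add_zero]
  smul_mem' := by
    intro c A hA i j
    have h : ∀ k ∈ Finset.univ, H i k * star (H j k) * (((c • A) i k : ℂ) - (((c • A) j k : ℝ) : ℂ))
        = (c : ℂ) * (H i k * star (H j k) * ((A i k : ℂ) - (A j k : ℂ))) := by
      intro k _
      simp only [Matrix.smul_apply, smul_eq_mul]
      push_cast
      ring
    rw [Finset.sum_congr rfl h, ← Finset.mul_sum, hA i j, mul_zero]

noncomputable def defect {I J : Type*} [Fintype I] [Fintype J] (H : Matrix I J ℂ) : ℕ :=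
  Module.finrank ℝ (defectSubmodule H)

/-- The Fourier matrix `F_N = (w^{ij})` with `w = e^{2πi/N}`. -/
noncomputable def FourierMatrix (N : ℕ) : Matrix (Fin N) (Fin N) ℂ :=
  Matrix.of fun i j => Complex.exp (2 * Real.pi * Complex.I / N) ^ ((i : ℕ) * (j : ℕ))

/-!
The defect equations of `F_N` are invariant under entrywise complex conjugation, so the real
solution space is a real form of the complex one and `d(F_N)` is the complex dimension of the
latter. Index `F_N` by `ℤ/N` and apply the discrete Fourier transform to each row of a complex
solution `B`: the defect equations say exactly that column `d` of the result is `d`-periodic,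
i.e. that a second transform down the columns vanishes at every `(m, d)` with `m d ≠ 0`. Since the
two-dimensional transform is invertible, the solutions correspond to arbitrary values on the pairs
with `m d = 0`. Counting these pairs row by row gives `∑ gcd(k, N)`, which is Pillai's function
`id * φ`: it is multiplicative and equals `p^a (1 + a - a/p)` on prime powers.
-/

open Finset Complex

section ComplexDefect

variable {m n : Type*} [Fintype n] (H : Matrix m n ℂ)

noncomputable def complexDefectSubmodule : Submodule ℂ (Matrix m n ℂ) where
  carrier := {A | ∀ i j, ∑ k, H i k * star (H j k) * (A i k - A j k) = 0}
  zero_mem' := by simp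
  add_mem' {A B} hA hB i j := by
    simp only [Matrix.add_apply, add_sub_add_comm, mul_add, sum_add_distrib, hA i j, hB i j,
      add_zero]
  smul_mem' c A hA i j := by
    simp only [Matrix.smul_apply, smul_eq_mul, ← mul_sub, mul_left_comm _ c, ← mul_sum, hA i j,
      mul_zero]

variable {H}

theorem mem_complexDefectSubmodule {A : Matrix m n ℂ} :
    A ∈ complexDefectSubmodule H ↔ ∀ i j, ∑ k, H i k * star (H j k) * (A i k - A j k) = 0 :=
  Iff.rfl

theorem map_star_mem_complexDefectSubmodule {A : Matrix m n ℂ}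
    (hA : A ∈ complexDefectSubmodule H) : A.map star ∈ complexDefectSubmodule H := by
  intro i j
  have h := congrArg star (hA j i)
  rw [star_zero, star_sum, ← neg_eq_zero, ← sum_neg_distrib] at h
  rw [← h]
  refine sum_congr rfl fun k _ ↦ ?_
  simp only [Matrix.map_apply, star_mul, star_star, star_sub]
  ring

variable [Fintype m]

theorem map_ofReal_mem_complexDefectSubmodule {X : Matrix m n ℝ} :
    X.map ofReal ∈ complexDefectSubmodule H ↔ X ∈ defectSubmodule H :=
  Iff.rfl

theorem mem_complexDefectSubmodule_iff_re_im {A : Matrix m n ℂ} :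
    A ∈ complexDefectSubmodule H ↔
      A.map re ∈ defectSubmodule H ∧ A.map im ∈ defectSubmodule H := by
  set T := complexDefectSubmodule H
  simp only [← map_ofReal_mem_complexDefectSubmodule, Matrix.map_map]
  constructor
  · intro hA
    have hA' := map_star_mem_complexDefectSubmodule hA
    constructor
    · convert T.smul_mem (2⁻¹ : ℂ) (T.add_mem hA hA') using 1
      ext i j
      simp [re_eq_add_conj, div_eq_inv_mul]
    · convert T.smul_mem (2 * I)⁻¹ (T.sub_mem hA hA') using 1
      ext i j
      simp [im_eq_sub_conj, div_eq_inv_mul]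
  · rintro ⟨hre, him⟩
    convert T.add_mem hre (T.smul_mem I him) using 1
    ext i j
    simp [mul_comm I, re_add_im]

variable (H) in
noncomputable def complexDefectSubmoduleEquivProd :
    complexDefectSubmodule H ≃ₗ[ℝ] defectSubmodule H × defectSubmodule H where
  toFun A := (⟨A.1.map re, (mem_complexDefectSubmodule_iff_re_im.1 A.2).1⟩,
    ⟨A.1.map im, (mem_complexDefectSubmodule_iff_re_im.1 A.2).2⟩)
  invFun X := ⟨X.1.1.map ofReal + I • X.2.1.map ofReal,
    (complexDefectSubmodule H).add_mem X.1.2 ((complexDefectSubmodule H).smul_mem I X.2.2)⟩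
  map_add' A B := by ext <;> simp
  map_smul' c A := by ext <;> simp
  left_inv A := by ext; simp [mul_comm I, re_add_im]
  right_inv X := by ext <;> simp

theorem defect_eq_finrank_complexDefectSubmodule :
    defect H = Module.finrank ℂ (complexDefectSubmodule H) := by
  have h := Module.finrank_mul_finrank ℝ ℂ (complexDefectSubmodule H)
  rw [(complexDefectSubmoduleEquivProd H).finrank_eq,
    Module.finrank_prod, Complex.finrank_real_complex] at h
  unfold defect
  omega

end ComplexDefect

section Reindex

variable {m n m' n' : Type*} [Fintype m] [Fintype n] [Fintype m'] [Fintype n']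

theorem defectSubmodule_reindex (H : Matrix m n ℂ) (e : m ≃ m') (f : n ≃ n') :
    defectSubmodule (Matrix.reindex e f H) =
      (defectSubmodule H).map
        (Matrix.reindexLinearEquiv ℝ ℝ e f : Matrix m n ℝ →ₗ[ℝ] Matrix m' n' ℝ) := by
  rw [Submodule.map_equiv_eq_comap_symm]
  ext X
  change (∀ i j, _) ↔ ∀ i j, _
  refine e.symm.forall_congr_left.trans (forall_congr' fun i ↦
    e.symm.forall_congr_left.trans (forall_congr' fun j ↦ ?_))
  rw [← f.symm.sum_comp]
  simp only [LinearEquiv.coe_coe, Matrix.symm_reindexLinearEquiv, Matrix.coe_reindexLinearEquiv,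
    Matrix.reindex_apply, Matrix.submatrix_apply, Equiv.symm_symm, Equiv.symm_apply_apply,
    Equiv.apply_symm_apply]

theorem defect_reindex (H : Matrix m n ℂ) (e : m ≃ m') (f : n ≃ n') :
    defect (Matrix.reindex e f H) = defect H := by
  rw [defect, defectSubmodule_reindex, LinearEquiv.finrank_map_eq, defect]

end Reindex

namespace ZMod

variable {N : ℕ} [NeZero N]

theorem finEquiv_apply (i : Fin N) : finEquiv N i = ((i : ℕ) : ZMod N) := by
  obtain ⟨n, rfl⟩ := Nat.exists_eq_succ_of_ne_zero (NeZero.ne N)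
  exact (Fin.cast_val_eq_self i).symm

theorem stdAddChar_eq_one_iff {x : ZMod N} : stdAddChar x = 1 ↔ x = 0 := by
  rw [← AddChar.map_zero_eq_one (stdAddChar : AddChar (ZMod N) ℂ), injective_stdAddChar.eq_iff]

section DFT

variable {E : Type*} [AddCommGroup E] [Module ℂ E]

theorem dft_comp_add_right (Φ : ZMod N → E) (d k : ZMod N) :
    𝓕 (fun j ↦ Φ (j + d)) k = stdAddChar (d * k) • 𝓕 Φ k := by
  simp only [dft_apply, smul_sum]
  rw [← Equiv.sum_comp (Equiv.addRight d)
    (fun j ↦ stdAddChar (d * k) • stdAddChar (-(j * k)) • Φ j)]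
  refine sum_congr rfl fun j _ ↦ ?_
  rw [smul_smul, ← AddChar.map_add_eq_mul, Equiv.coe_addRight]
  congr 2
  ring

theorem periodic_iff_dft_eq_zero {Φ : ZMod N → E} {d : ZMod N} :
    Function.Periodic Φ d ↔ ∀ k, k * d ≠ 0 → 𝓕 Φ k = 0 := by
  have hshift : Function.Periodic Φ d ↔ ∀ k, stdAddChar (d * k) • 𝓕 Φ k = 𝓕 Φ k := by
    rw [Function.Periodic, ← funext_iff, ← dft.injective.eq_iff, funext_iff]
    simp only [dft_comp_add_right]
  rw [hshift]
  refine forall_congr' fun k ↦ ?_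
  rw [← sub_eq_zero]
  nth_rw 2 [← one_smul ℂ (𝓕 Φ k)]
  rw [← sub_smul, smul_eq_zero, sub_eq_zero, stdAddChar_eq_one_iff, mul_comm, or_iff_not_imp_left]

end DFT

variable (N) in
noncomputable def fourierMatrix : Matrix (ZMod N) (ZMod N) ℂ :=
  Matrix.of fun x y ↦ stdAddChar (x * y)

theorem mem_complexDefectSubmodule_fourierMatrix_iff_periodic {B : Matrix (ZMod N) (ZMod N) ℂ} :
    B ∈ complexDefectSubmodule (fourierMatrix N) ↔
      ∀ d, Function.Periodic (fun x ↦ 𝓕 (B x) d) d := by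
  have hsum : ∀ x y, ∑ k, fourierMatrix N x k * star (fourierMatrix N y k) * (B x k - B y k) =
      𝓕 (B x) (y - x) - 𝓕 (B y) (y - x) := by
    intro x y
    simp only [dft_apply, ← sum_sub_distrib, smul_eq_mul, ← mul_sub]
    refine sum_congr rfl fun k _ ↦ ?_
    rw [fourierMatrix, Matrix.of_apply, Matrix.of_apply, ← starRingEnd_apply,
      ← AddChar.map_neg_eq_conj, ← AddChar.map_add_eq_mul]
    congr 2
    ring
  simp only [mem_complexDefectSubmodule, hsum, sub_eq_zero, Function.Periodic]
  constructor
  · intro h d x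
    simpa using (h x (x + d)).symm
  · intro h x y
    simpa using (h (y - x) x).symm

theorem mem_complexDefectSubmodule_fourierMatrix_iff {B : Matrix (ZMod N) (ZMod N) ℂ} :
    B ∈ complexDefectSubmodule (fourierMatrix N) ↔
      ∀ m d, m * d ≠ 0 → 𝓕 (fun x ↦ 𝓕 (B x) d) m = 0 := by
  simp only [mem_complexDefectSubmodule_fourierMatrix_iff_periodic, periodic_iff_dft_eq_zero]
  exact forall_comm

variable (N) in
noncomputable def dft₂ : Matrix (ZMod N) (ZMod N) ℂ ≃ₗ[ℂ] (ZMod N × ZMod N → ℂ) :=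
  (Matrix.ofLinearEquiv ℂ).symm ≪≫ₗ LinearEquiv.piCongrRight (fun _ ↦ dft) ≪≫ₗ
    dft ≪≫ₗ (LinearEquiv.curry ℂ ℂ _ _).symm

theorem dft₂_apply (B : Matrix (ZMod N) (ZMod N) ℂ) (p : ZMod N × ZMod N) :
    dft₂ N B p = 𝓕 (fun x ↦ 𝓕 (B x) p.2) p.1 := by
  obtain ⟨m, d⟩ := p
  simp only [dft₂, LinearEquiv.trans_apply, LinearEquiv.coe_curry_symm,
    Function.uncurry_apply_pair]
  simp [dft_apply, Finset.sum_apply]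

theorem complexDefectSubmodule_fourierMatrix :
    complexDefectSubmodule (fourierMatrix N) =
      (⨅ p ∈ {p : ZMod N × ZMod N | p.1 * p.2 = 0}ᶜ,
        LinearMap.ker (LinearMap.proj p : (ZMod N × ZMod N → ℂ) →ₗ[ℂ] ℂ)).comap
        (dft₂ N : Matrix (ZMod N) (ZMod N) ℂ →ₗ[ℂ] ZMod N × ZMod N → ℂ) := by
  ext B
  simp [mem_complexDefectSubmodule_fourierMatrix_iff, Submodule.mem_iInf, dft₂_apply]

theorem finrank_complexDefectSubmodule_fourierMatrix :
    Module.finrank ℂ (complexDefectSubmodule (fourierMatrix N)) =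
      Fintype.card {p : ZMod N × ZMod N // p.1 * p.2 = 0} := by
  rw [complexDefectSubmodule_fourierMatrix, Submodule.comap_equiv_eq_map_symm,
    LinearEquiv.finrank_map_eq, (LinearMap.iInfKerProjEquiv ℂ (fun _ ↦ ℂ) disjoint_compl_right
      (by simp)).finrank_eq, Module.finrank_fintype_fun_eq_card]
  rfl

theorem card_natCast_mul_eq_zero (k : ℕ) :
    Fintype.card {b : ZMod N // (k : ZMod N) * b = 0} = Nat.gcd k N := by
  have hker := IsAddCyclic.card_nsmulAddMonoidHom_ker (ZMod N) k
  rw [Nat.card_zmod, Nat.gcd_comm] at hker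
  rw [← hker, ← Nat.card_eq_fintype_card]
  simp [nsmul_eq_mul]

theorem card_mul_eq_zero :
    Fintype.card {p : ZMod N × ZMod N // p.1 * p.2 = 0} = ∑ k ∈ range N, Nat.gcd k N := by
  rw [Fintype.card_congr (Equiv.subtypeProdEquivSigmaSubtype fun a b : ZMod N ↦ a * b = 0),
    Fintype.card_sigma, ← (finEquiv N).toEquiv.sum_comp, ← Fin.sum_univ_eq_sum_range]
  simp [finEquiv_apply, card_natCast_mul_eq_zero]

end ZMod

theorem FourierMatrix_eq_reindex (N : ℕ) [NeZero N] :
    FourierMatrix N = Matrix.reindex (ZMod.finEquiv N).toEquiv.symm (ZMod.finEquiv N).toEquiv.symm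
      (ZMod.fourierMatrix N) := by
  ext i j
  rw [Matrix.reindex_apply, Matrix.submatrix_apply, Equiv.symm_symm, ZMod.fourierMatrix,
    Matrix.of_apply, RingEquiv.toEquiv_eq_coe, RingEquiv.coe_toEquiv, ZMod.finEquiv_apply,
    ZMod.finEquiv_apply, ← Nat.cast_mul, ZMod.stdAddChar_apply, ZMod.toCircle_natCast,
    FourierMatrix, Matrix.of_apply, ← Complex.exp_nat_mul]
  congr 1
  push_cast
  ring

theorem defect_FourierMatrix (N : ℕ) [NeZero N] :
    defect (FourierMatrix N) = Fintype.card {p : ZMod N × ZMod N // p.1 * p.2 = 0} := by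
  rw [FourierMatrix_eq_reindex, defect_reindex, defect_eq_finrank_complexDefectSubmodule,
    ZMod.finrank_complexDefectSubmodule_fourierMatrix]

theorem Nat.sum_range_gcd_eq_sum_divisors (n : ℕ) :
    ∑ k ∈ range n, Nat.gcd k n = ∑ d ∈ n.divisors, d * (n / d).totient := by
  rcases n.eq_zero_or_pos with rfl | hn
  · simp
  have hmaps : ∀ k ∈ range n, n.gcd k ∈ n.divisors := fun k _ ↦
    mem_divisors.2 ⟨Nat.gcd_dvd_left n k, hn.ne'⟩
  calc ∑ k ∈ range n, Nat.gcd k n = ∑ k ∈ range n, n.gcd k :=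
        sum_congr rfl fun k _ ↦ gcd_comm k n
    _ = ∑ d ∈ n.divisors, ∑ k ∈ range n with n.gcd k = d, d :=
      (sum_fiberwise_of_maps_to' hmaps fun d ↦ d).symm
    _ = ∑ d ∈ n.divisors, d * (n / d).totient := sum_congr rfl fun d hd ↦ by
      rw [sum_const, smul_eq_mul, totient_div_of_dvd (dvd_of_mem_divisors hd), mul_comm]

namespace ArithmeticFunction

def totient : ArithmeticFunction ℕ := ⟨Nat.totient, Nat.totient_zero⟩

theorem totient_apply (n : ℕ) : totient n = n.totient := rfl

theorem isMultiplicative_totient : IsMultiplicative totient :=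
  ⟨Nat.totient_one, fun h ↦ Nat.totient_mul h⟩

def pillai : ArithmeticFunction ℕ := ArithmeticFunction.id * totient

theorem pillai_apply (n : ℕ) : pillai n = ∑ k ∈ range n, Nat.gcd k n := by
  rw [pillai, mul_apply,
    Nat.sum_divisorsAntidiagonal (fun a b ↦ ArithmeticFunction.id a * totient b),
    Nat.sum_range_gcd_eq_sum_divisors]
  simp only [id_apply, totient_apply]

theorem isMultiplicative_pillai : IsMultiplicative pillai :=
  isMultiplicative_id.mul isMultiplicative_totient

theorem pillai_prime_pow {p : ℕ} (hp : p.Prime) (a : ℕ) :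
    pillai (p ^ a) = p ^ a + a * (p ^ (a - 1) * (p - 1)) := by
  rw [pillai_apply, Nat.sum_range_gcd_eq_sum_divisors, Nat.sum_divisors_prime_pow hp,
    sum_range_succ, Nat.div_self (pow_pos hp.pos a), Nat.totient_one, mul_one, add_comm]
  have hterm : ∀ i ∈ range a, p ^ i * (p ^ a / p ^ i).totient = p ^ (a - 1) * (p - 1) := by
    intro i hi
    have hia : i < a := mem_range.1 hi
    rw [Nat.pow_div hia.le hp.pos, Nat.totient_prime_pow hp (Nat.sub_pos_of_lt hia), ← mul_assoc,
      ← pow_add]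
    congr 2
    omega
  rw [sum_congr rfl hterm, sum_const, card_range, smul_eq_mul]

theorem cast_pillai_prime_pow {p : ℕ} (hp : p.Prime) (a : ℕ) :
    (pillai (p ^ a) : ℚ) = p ^ a * (1 + a - a / p) := by
  rw [pillai_prime_pow hp]
  rcases a with _ | b
  · simp
  · have hp0 : (p : ℚ) ≠ 0 := Nat.cast_ne_zero.2 hp.ne_zero
    push_cast [Nat.cast_sub hp.one_le]
    field_simp
    ring

theorem cast_pillai_eq_mul_prod {n : ℕ} (hn : n ≠ 0) :
    (pillai n : ℚ) =
      n * ∏ p ∈ n.primeFactors, (1 + (n.factorization p : ℚ) - n.factorization p / p) := by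
  rw [isMultiplicative_pillai.multiplicative_factorization _ hn, Finsupp.prod,
    Nat.support_factorization, Nat.cast_prod,
    prod_congr rfl fun p hp ↦ cast_pillai_prime_pow (Nat.prime_of_mem_primeFactors hp) _,
    prod_mul_distrib]
  congr 1
  have hprod := Nat.prod_factorization_pow_eq_self hn
  rw [Finsupp.prod, Nat.support_factorization] at hprod
  exact_mod_cast hprod

end ArithmeticFunction

/-- the defect of the Fourier matrix `F_N` equals `∑_{k=0}^{N−1} gcd(k,N)`,
equals the number of pairs `(i,j) ∈ (ℤ/N)²` with `ij = 0` (the number of 1 entries of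
`F_N`), and equals `N ∏_i (1 + a_i − a_i/p_i)` for `N = ∏ p_i^{a_i}`. -/
theorem stmt_4 (N : ℕ) [NeZero N] :
    defect (FourierMatrix N) = ∑ k ∈ Finset.range N, Nat.gcd k N ∧
    defect (FourierMatrix N) = Fintype.card {p : ZMod N × ZMod N // p.1 * p.2 = 0} ∧
    (defect (FourierMatrix N) : ℚ) =
      (N : ℚ) * ∏ p ∈ N.primeFactors,
        (1 + (N.factorization p : ℚ) - (N.factorization p : ℚ) / (p : ℚ)) := by
  have hcard := defect_FourierMatrix N
  have hgcd : defect (FourierMatrix N) = ∑ k ∈ Finset.range N, Nat.gcd k N :=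
    hcard.trans ZMod.card_mul_eq_zero
  refine ⟨hgcd, hcard, ?_⟩
  rw [hgcd, ← ArithmeticFunction.pillai_apply]
  exact ArithmeticFunction.cast_pillai_eq_mul_prod (NeZero.ne N)
end

section
/- Let K ∈ M_M(ℂ) and L ∈ M_N(ℂ) be complex Hadamard matrices, and let K⊗L ∈ M_{MN}(ℂ) be their Kronecker product, (K⊗L)_{(i,a),(j,b)} = K_{ij}·L_{ab}. Then K⊗L is a complex Hadamard matrix and its defect satisfies d(K⊗L) ≥ d(K)·d(L). -/
/-! Orthogonality passes to `K ⊗ₖ L` because `(K ⊗ₖ L)(K ⊗ₖ L)ᴴ = (K Kᴴ) ⊗ₖ (L Lᴴ)`.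
For the defect, the defining condition of
`A ∈ defectSubmodule H` says that `∑ₖ H i k · conj (H j k) · A i k` is symmetric in `i, j`;
for `K ⊗ₖ L` and `A ⊗ₖ B` this sum factors into the corresponding sums for `(K, A)` and `(L, B)`.
Hence `A ⊗ B ↦ A ⊗ₖ B` maps `defectSubmodule K ⊗ defectSubmodule L` injectively into
`defectSubmodule (K ⊗ₖ L)`. -/

open scoped Kronecker TensorProduct

open Matrix

section Orthogonality

variable {α ι κ : Type*} [Fintype ι] [Fintype κ] [DecidableEq ι] [DecidableEq κ]

theorem Matrix.mul_conjTranspose_eq_smul_one_iff [Semiring α] [StarRing α]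
    (H : Matrix ι ι α) (c : α) :
    H * Hᴴ = c • (1 : Matrix ι ι α) ↔
      ∀ i j, ∑ k, H i k * star (H j k) = if i = j then c else 0 := by
  simp only [← Matrix.ext_iff, mul_apply, conjTranspose_apply, smul_apply, one_apply, smul_eq_mul,
    mul_ite, mul_one, mul_zero]

theorem Matrix.kronecker_mul_conjTranspose_eq_smul_one [CommSemiring α] [StarRing α]
    {K : Matrix ι ι α} {L : Matrix κ κ α} {a b : α}
    (hK : K * Kᴴ = a • 1) (hL : L * Lᴴ = b • 1) :
    (K ⊗ₖ L) * (K ⊗ₖ L)ᴴ = (a * b) • 1 := by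
  rw [conjTranspose_kronecker, ← mul_kronecker_mul, hK, hL, smul_kronecker, kronecker_smul,
    one_kronecker_one, smul_smul]

end Orthogonality

section Defect

variable {I J I' J' : Type*} [Fintype I] [Fintype J] [Fintype I'] [Fintype J']

theorem mem_defectSubmodule_iff {H : Matrix I J ℂ} {A : Matrix I J ℝ} :
    A ∈ defectSubmodule H ↔
      ∀ i j, ∑ k, H i k * star (H j k) * A i k = ∑ k, H i k * star (H j k) * A j k := by
  show (∀ i j, ∑ k, H i k * star (H j k) * ((A i k : ℂ) - (A j k : ℂ)) = 0) ↔ _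
  simp only [mul_sub, Finset.sum_sub_distrib, sub_eq_zero]

theorem kronecker_mem_defectSubmodule {K : Matrix I J ℂ} {L : Matrix I' J' ℂ}
    {A : Matrix I J ℝ} {B : Matrix I' J' ℝ}
    (hA : A ∈ defectSubmodule K) (hB : B ∈ defectSubmodule L) :
    A ⊗ₖ B ∈ defectSubmodule (K ⊗ₖ L) := by
  rw [mem_defectSubmodule_iff] at hA hB ⊢
  rintro ⟨i, a⟩ ⟨j, b⟩
  have factor : ∀ x : I × I', ∑ z, (K ⊗ₖ L) (i, a) z * star ((K ⊗ₖ L) (j, b) z) * (A ⊗ₖ B) x z =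
      (∑ k, K i k * star (K j k) * A x.1 k) * ∑ l, L a l * star (L b l) * B x.2 l := by
    intro x
    rw [Fintype.sum_prod_type, Finset.sum_mul_sum]
    simp only [kroneckerMap_apply, star_mul', Complex.ofReal_mul]
    exact Finset.sum_congr rfl fun _ _ => Finset.sum_congr rfl fun _ _ => by ring
  rw [factor (i, a), factor (j, b), hA i j, hB a b]

theorem defect_mul_defect_le_defect_kronecker (K : Matrix I J ℂ) (L : Matrix I' J' ℂ) :
    defect K * defect L ≤ defect (K ⊗ₖ L) := by
  classical
  let Φ : defectSubmodule K ⊗[ℝ] defectSubmodule L →ₗ[ℝ] Matrix (I × I') (J × J') ℝ :=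
    (kroneckerLinearEquiv I J I' J' ℝ).toLinearMap ∘ₗ
      TensorProduct.map (defectSubmodule K).subtype (defectSubmodule L).subtype
  have hΦ_injective : Function.Injective Φ :=
    (kroneckerLinearEquiv I J I' J' ℝ).injective.comp <|
      TensorProduct.map_injective_of_flat_flat _ _ (Submodule.injective_subtype _)
        (Submodule.injective_subtype _)
  have hΦ_mem : ∀ x, Φ x ∈ defectSubmodule (K ⊗ₖ L) := fun x =>
    x.induction_on (by simp) (fun A B => kronecker_mem_defectSubmodule A.2 B.2)
      (fun _ _ hx hy => by simpa only [map_add] using add_mem hx hy)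
  calc defect K * defect L = Module.finrank ℝ (defectSubmodule K ⊗[ℝ] defectSubmodule L) :=
        Module.finrank_tensorProduct.symm
    _ ≤ defect (K ⊗ₖ L) :=
        LinearMap.finrank_le_finrank_of_injective (f := Φ.codRestrict _ hΦ_mem)
          fun _ _ h => hΦ_injective (congrArg Subtype.val h)

end Defect

/-- the Kronecker product of two complex Hadamard matrices is a complex
Hadamard matrix, and its defect satisfies `d(K ⊗ L) ≥ d(K)·d(L)`. -/
theorem stmt_8 (M N : ℕ)
    (K : Matrix (Fin M) (Fin M) ℂ) (L : Matrix (Fin N) (Fin N) ℂ)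
    (hKmod : ∀ i j, ‖K i j‖ = 1)
    (hKorth : ∀ i j : Fin M, ∑ k, K i k * star (K j k) = if i = j then (M : ℂ) else 0)
    (hLmod : ∀ i j, ‖L i j‖ = 1)
    (hLorth : ∀ i j : Fin N, ∑ k, L i k * star (L j k) = if i = j then (N : ℂ) else 0) :
    (∀ x y : Fin M × Fin N, ‖(K ⊗ₖ L) x y‖ = 1) ∧
    (∀ x y : Fin M × Fin N,
      ∑ z : Fin M × Fin N, (K ⊗ₖ L) x z * star ((K ⊗ₖ L) y z) =
        if x = y then ((M * N : ℕ) : ℂ) else 0) ∧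
    defect K * defect L ≤ defect (K ⊗ₖ L) := by
  refine ⟨fun x y => by simp [hKmod, hLmod], ?_, defect_mul_defect_le_defect_kronecker K L⟩
  rw [← mul_conjTranspose_eq_smul_one_iff] at hKorth hLorth ⊢
  rw [Nat.cast_mul]
  exact kronecker_mul_conjTranspose_eq_smul_one hKorth hLorth
end

section
/- Let N, M, k ≥ 1 be integers, let q = e^{2πi/(MNk)}, let ν = e^{2πi/N}, w = e^{2πi/M}, and let p_0,…,p_{M−1} ∈ ℤ. Define H ∈ M_{MN}(ℂ), with rows and columns indexed by pairs (i,a) with 0 ≤ i ≤ N−1 and 0 ≤ a ≤ M−1, by H_{(i,a),(j,b)} = ν^{ij}·w^{ab}·q^{i(M·p_b + b)}. Then H is a complex Hadamard matrix (it is the Diţă deformation F_N ⊗_Q F_M with parameter matrix Q_{ib} = q^{i(M·p_b+b)}), and H is a master Hadamard matrix: there exist real numbers t_{(i,a)} and n_{(j,b)} such that H_{(i,a),(j,b)} = e^{i·t_{(i,a)}·n_{(j,b)}} for all indices. -/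
/-!
`H` is the Diţă deformation `F_N ⊗_Q F_M` of two Fourier matrices with the unimodular parameters
`Q_{ib} = q^{i(Mp_b+b)}`. Orthogonality of the rows of any such deformation reduces, after the
sum over the columns `(j, b)` factors, to orthogonality of the rows of `F_N` and `F_M`.
For the master form take `t_{(i,a)} = i + Nka` and `n_{(j,b)} = 2π(Mkj + Mp_b + b)/(MNk)`: then
`t n / 2π` differs from `ij/N + ab/M + i(Mp_b+b)/(MNk)` by the integer `akj + ap_b`.
Unimodularity of the entries follows from the master form.
-/

open Complex

lemma sum_fin_pow_of_pow_eq_one {K : Type*} [Field K] [DecidableEq K] {ζ : K} {N : ℕ}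
    (hζ : ζ ^ N = 1) :
    ∑ j : Fin N, ζ ^ (j : ℕ) = if ζ = 1 then (N : K) else 0 := by
  rw [Fin.sum_univ_eq_sum_range (ζ ^ ·)]
  split_ifs with h
  · simp [h]
  · rw [geom_sum_eq h, hζ, sub_self, zero_div]

lemma IsPrimitiveRoot.sum_pow_mul_star_pow {ν : ℂ} {N : ℕ} (hν : IsPrimitiveRoot ν N)
    (i i' : Fin N) :
    ∑ j : Fin N, ν ^ ((i : ℕ) * j) * star (ν ^ ((i' : ℕ) * j)) =
      if i = i' then (N : ℂ) else 0 := by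
  have hN : N ≠ 0 := (Fin.pos i).ne'
  have hν0 : ν ≠ 0 := hν.ne_zero hN
  have hstar (m : ℕ) : star (ν ^ m) = (ν ^ m)⁻¹ := by
    rw [inv_eq_conj (by rw [norm_pow, hν.norm'_eq_one hN, one_pow])]; rfl
  set ζ := ν ^ (i : ℕ) * (ν ^ (i' : ℕ))⁻¹
  have hζ (j : ℕ) : ν ^ ((i : ℕ) * j) * star (ν ^ ((i' : ℕ) * j)) = ζ ^ j := by
    rw [hstar, mul_pow, inv_pow, pow_mul, pow_mul]
  have hζN : ζ ^ N = 1 := by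
    rw [mul_pow, inv_pow, pow_right_comm ν i N, pow_right_comm ν i' N, hν.pow_eq_one, one_pow,
      one_pow, inv_one, mul_one]
  have hζ1 : ζ = 1 ↔ i = i' := by
    rw [mul_inv_eq_one₀ (pow_ne_zero _ hν0), Fin.ext_iff]
    exact ⟨hν.pow_inj i.isLt i'.isLt, fun h => h ▸ rfl⟩
  simp only [hζ, sum_fin_pow_of_pow_eq_one hζN, hζ1]

def ditaDeformation {ι κ : Type*} (H : Matrix ι ι ℂ) (K : Matrix κ κ ℂ) (Q : ι → κ → ℂ) :
    Matrix (ι × κ) (ι × κ) ℂ :=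
  fun x y => Q x.1 y.2 * H x.1 y.1 * K x.2 y.2

lemma ditaDeformation_sum_mul_star {ι κ : Type*} [Fintype ι] [Fintype κ] [DecidableEq ι]
    [DecidableEq κ] {H : Matrix ι ι ℂ} {K : Matrix κ κ ℂ} {Q : ι → κ → ℂ} {c d : ℂ}
    (hH : ∀ i i', ∑ j, H i j * star (H i' j) = if i = i' then c else 0)
    (hK : ∀ a a', ∑ b, K a b * star (K a' b) = if a = a' then d else 0)
    (hQ : ∀ i b, ‖Q i b‖ = 1) (x y : ι × κ) :
    ∑ z, ditaDeformation H K Q x z * star (ditaDeformation H K Q y z) =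
      if x = y then c * d else 0 := by
  obtain ⟨i, a⟩ := x
  obtain ⟨i', a'⟩ := y
  have hsplit : ∀ j b, ditaDeformation H K Q (i, a) (j, b) *
      star (ditaDeformation H K Q (i', a') (j, b)) =
        H i j * star (H i' j) * (Q i b * star (Q i' b) * (K a b * star (K a' b))) := by
    intro j b
    simp only [ditaDeformation, star_mul']
    ring
  simp only [Fintype.sum_prod_type, hsplit, ← Finset.sum_mul_sum, hH, Prod.mk.injEq]
  by_cases hi : i = i'
  · subst hi
    have hQQ : ∀ b, Q i b * star (Q i b) = 1 := fun b => by
      rw [Complex.star_def, mul_conj', hQ, ofReal_one, one_pow]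
    simp only [hQQ, one_mul, hK, true_and]
    split_ifs <;> simp
  · simp [hi]

lemma fourier_dita_entry_eq_exp_mul_mul {N M k : ℕ} (hN : N ≠ 0) (hM : M ≠ 0) (hk : k ≠ 0)
    (P : ℤ) (i j a b : ℕ) :
    exp (2 * Real.pi * I / N) ^ (i * j) * exp (2 * Real.pi * I / M) ^ (a * b) *
        exp (2 * Real.pi * I / (M * N * k)) ^ ((i : ℤ) * (M * P + b)) =
      exp (I * ((i + N * k * a : ℝ) : ℂ) *
        ((2 * Real.pi * (M * k * j + M * P + b) / (M * N * k) : ℝ) : ℂ)) := by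
  rw [← exp_nat_mul, ← exp_nat_mul, ← exp_int_mul, ← exp_add, ← exp_add,
    exp_eq_exp_iff_exists_int]
  refine ⟨-(a * k * j + a * P), ?_⟩
  push_cast
  field_simp
  ring

/-- the Diţă deformation `H_{(i,a),(j,b)} = ν^{ij} w^{ab} q^{i(Mp_b+b)}`
(with `q = e^{2πi/(MNk)}`, `ν = e^{2πi/N}`, `w = e^{2πi/M}`, `p_b ∈ ℤ`) is a complex
Hadamard matrix, and it is a master Hadamard matrix:
`H_{(i,a),(j,b)} = e^{i t_{(i,a)} n_{(j,b)}}` for some reals `t, n`. -/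
theorem stmt_12 (N M k : ℕ) (hN : 1 ≤ N) (hM : 1 ≤ M) (hk : 1 ≤ k)
    (p : Fin M → ℤ)
    (q ν w : ℂ)
    (hq : q = Complex.exp (2 * Real.pi * Complex.I / (M * N * k)))
    (hν : ν = Complex.exp (2 * Real.pi * Complex.I / N))
    (hw : w = Complex.exp (2 * Real.pi * Complex.I / M))
    (H : Matrix (Fin N × Fin M) (Fin N × Fin M) ℂ)
    (hH : ∀ (i j : Fin N) (a b : Fin M),
      H (i, a) (j, b) =
        ν ^ ((i : ℕ) * (j : ℕ)) * w ^ ((a : ℕ) * (b : ℕ)) *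
          q ^ (((i : ℕ) : ℤ) * ((M : ℤ) * p b + (b : ℕ)))) :
    (∀ x y : Fin N × Fin M, ‖H x y‖ = 1) ∧
    (∀ x y : Fin N × Fin M,
      ∑ z : Fin N × Fin M, H x z * star (H y z) =
        if x = y then ((M * N : ℕ) : ℂ) else 0) ∧
    (∃ t n : Fin N × Fin M → ℝ, ∀ x y : Fin N × Fin M,
      H x y = Complex.exp (Complex.I * (t x) * (n y))) := by
  subst hq hν hw
  have hN0 : N ≠ 0 := by omega
  have hM0 : M ≠ 0 := by omega
  obtain ⟨t, n, hmaster⟩ : ∃ t n : Fin N × Fin M → ℝ, ∀ x y,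
      H x y = exp (I * (t x) * (n y)) :=
    ⟨fun x => x.1 + N * k * x.2,
      fun y => 2 * Real.pi * (M * k * y.1 + M * p y.2 + y.2) / (M * N * k),
      fun ⟨i, a⟩ ⟨j, b⟩ => (hH i j a b).trans
        (fourier_dita_entry_eq_exp_mul_mul hN0 hM0 (by omega) (p b) i j a b)⟩
  have hdita : H = ditaDeformation
      (fun (i j : Fin N) => exp (2 * Real.pi * I / N) ^ ((i : ℕ) * (j : ℕ)))
      (fun (a b : Fin M) => exp (2 * Real.pi * I / M) ^ ((a : ℕ) * (b : ℕ)))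
      (fun (i : Fin N) (b : Fin M) =>
        exp (2 * Real.pi * I / (M * N * k)) ^ (((i : ℕ) : ℤ) * (M * p b + (b : ℕ)))) := by
    ext ⟨i, a⟩ ⟨j, b⟩
    simp only [hH, ditaDeformation]
    ring
  refine ⟨fun x y => by simp [hmaster, norm_exp], fun x y => ?_, t, n, hmaster⟩
  rw [hdita, ditaDeformation_sum_mul_star (isPrimitiveRoot_exp N hN0).sum_pow_mul_star_pow
    (isPrimitiveRoot_exp M hM0).sum_pow_mul_star_pow (fun i b => by simp [norm_exp, div_re]),
    Nat.cast_mul, mul_comm]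
end

section
/- Let H ∈ M_N(ℂ) be a master Hadamard matrix, given by H_{jk} = e^{i·m_j·n_k} with m, n ∈ ℝ^N. Define L ∈ M_N(ℂ) by L_{ij} = ∑_{k=1}^N e^{−i(m_i + m_j)·n_k} and define R, with rows indexed by 1 ≤ s ≤ N and columns by pairs (i,j), by R_{s,(i,j)} = ∑_{l=1}^N e^{i(m_i − m_s − m_j)·n_l}. Then the defect of H equals the real dimension of the space {B ∈ M_N(ℂ) : conj(B) = (1/N)·B·L, and ∑_{s=1}^N B_{is}·R_{s,(i,j)} = ∑_{s=1}^N B_{js}·R_{s,(i,j)} for all 1 ≤ i,j ≤ N}. -/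
/-- The real vector space `{B ∈ M_N(ℂ) : conj(B) = (1/N)·B·L, (BR)_{i,ij} = (BR)_{j,ij}}`
appearing in the defect formula for master Hadamard matrices. -/
noncomputable def masterSpace (N : ℕ) (L : Matrix (Fin N) (Fin N) ℂ)
    (R : Fin N → Fin N → Fin N → ℂ) : Submodule ℝ (Matrix (Fin N) (Fin N) ℂ) where
  carrier := {B | (∀ i j, star (B i j) = (1 / (N : ℂ)) * (B * L) i j) ∧
    (∀ i j, ∑ s, B i s * R s i j = ∑ s, B j s * R s i j)}
  zero_mem' := by
    refine ⟨fun i j => ?_, fun i j => ?_⟩ <;> simp [Matrix.zero_mul]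
  add_mem' := by
    rintro B C ⟨hB1, hB2⟩ ⟨hC1, hC2⟩
    refine ⟨fun i j => ?_, fun i j => ?_⟩
    · rw [Matrix.add_mul, Matrix.add_apply, Matrix.add_apply, star_add,
        hB1 i j, hC1 i j, mul_add]
    · simp only [Matrix.add_apply, add_mul, Finset.sum_add_distrib, hB2 i j, hC2 i j]
  smul_mem' := by
    rintro c B ⟨hB1, hB2⟩
    refine ⟨fun i j => ?_, fun i j => ?_⟩
    · rw [Matrix.smul_mul, Matrix.smul_apply, Matrix.smul_apply, star_smul,
        star_trivial, hB1 i j, mul_smul_comm]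
    · simp only [Matrix.smul_apply, smul_mul_assoc, ← Finset.smul_sum, hB2 i j]

/-! Since `H Hᴴ = N`, the matrix `Hᵀ` is invertible with inverse `conj(H) / N`, so `A ↦ A Hᵀ` is an
injective real-linear map from real to complex matrices. For a master matrix `L = conj(H) Hᴴ`, so a
complex `B` has the form `A Hᵀ` with `A` real exactly when `conj(B) = B L / N`, i.e. when
`B conj(H) / N` is real. Likewise `R_{s,(i,j)} = ∑_l H_{il} conj(H_{sl}) conj(H_{jl})`,
so column orthogonality `Hᴴ H = N` turns `∑_s B_{i's} R_{s,(i,j)}` into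
`N ∑_k A_{i'k} H_{ik} conj(H_{jk})`: the second condition on `B = A Hᵀ` is the defect equation for
`A`. -/

open Complex Matrix

lemma Matrix.map_star_mul {l m n α : Type*} [Fintype m] [CommSemiring α] [StarRing α]
    (M : Matrix l m α) (N : Matrix m n α) : (M * N).map star = M.map star * N.map star :=
  Matrix.map_mul (f := starRingEnd α)

section ScaledUnitary

variable {ι : Type*} [Fintype ι] [DecidableEq ι] {H : Matrix ι ι ℂ} {r : ℝ}

lemma conjTranspose_mul_self_eq_smul_one_s13 (hr : r ≠ 0) (hH : H * Hᴴ = r • 1) :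
    Hᴴ * H = r • 1 := by
  have h : H * (r⁻¹ • Hᴴ) = 1 := by rw [Matrix.mul_smul, hH, smul_smul, inv_mul_cancel₀ hr, one_smul]
  rw [← one_smul ℝ (Hᴴ * H), ← mul_inv_cancel₀ hr, mul_smul, ← Matrix.smul_mul,
    mul_eq_one_comm.mp h]

lemma map_star_mul_transpose_eq_smul_one (hH : H * Hᴴ = r • 1) : H.map star * Hᵀ = r • 1 := by
  rw [← conjTranspose_transpose, ← transpose_mul, hH, transpose_smul, transpose_one]

lemma transpose_mul_map_star_eq_smul_one (hr : r ≠ 0) (hH : H * Hᴴ = r • 1) :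
    Hᵀ * H.map star = r • 1 := by
  rw [← conjTranspose_transpose, ← transpose_mul, conjTranspose_mul_self_eq_smul_one_s13 hr hH,
    transpose_smul, transpose_one]

end ScaledUnitary

section OfRealMulTranspose

variable {ι : Type*} [Fintype ι] [DecidableEq ι]

noncomputable def ofRealMulTranspose (H : Matrix ι ι ℂ) : Matrix ι ι ℝ →ₗ[ℝ] Matrix ι ι ℂ :=
  LinearMap.mulRight ℝ Hᵀ ∘ₗ Complex.ofRealAm.mapMatrix.toLinearMap

variable {H : Matrix ι ι ℂ} {r : ℝ}

lemma ofRealMulTranspose_apply (A : Matrix ι ι ℝ) :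
    ofRealMulTranspose H A = A.map ofReal * Hᵀ := rfl

lemma ofRealMulTranspose_mul_map_star (hr : r ≠ 0) (hH : H * Hᴴ = r • 1) (A : Matrix ι ι ℝ) :
    ofRealMulTranspose H A * H.map star = r • A.map ofReal := by
  rw [ofRealMulTranspose_apply, Matrix.mul_assoc, transpose_mul_map_star_eq_smul_one hr hH,
    Matrix.mul_smul, Matrix.mul_one]

lemma ofRealMulTranspose_injective (hr : r ≠ 0) (hH : H * Hᴴ = r • 1) :
    Function.Injective (ofRealMulTranspose H) := by
  intro A A' hAA'
  have h := congrArg (· * H.map star) hAA'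
  simp only [ofRealMulTranspose_mul_map_star hr hH, smul_right_inj hr] at h
  exact Matrix.map_injective ofReal_injective h

lemma mem_range_ofRealMulTranspose_iff (hr : r ≠ 0) (hH : H * Hᴴ = r • 1) (B : Matrix ι ι ℂ) :
    B ∈ LinearMap.range (ofRealMulTranspose H) ↔
      B.map star = r⁻¹ • (B * (H.map star * Hᴴ)) := by
  constructor
  · rintro ⟨A, rfl⟩
    rw [← Matrix.mul_assoc, ofRealMulTranspose_mul_map_star hr hH, Matrix.smul_mul, smul_smul,
      inv_mul_cancel₀ hr, one_smul, ofRealMulTranspose_apply, Matrix.map_star_mul]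
    congr 1
    ext i j
    simp
  · intro hB
    set C := r⁻¹ • (B * H.map star)
    have hCH : C * Hᵀ = B := by
      rw [Matrix.smul_mul, Matrix.mul_assoc, map_star_mul_transpose_eq_smul_one hH,
        Matrix.mul_smul, Matrix.mul_one, smul_smul, inv_mul_cancel₀ hr, one_smul]
    have hC : C.map star = C := by
      have hstar : C.map star = r⁻¹ • (B.map star * H) := by
        have : (B * H.map star).map star = B.map star * H := by
          rw [Matrix.map_star_mul]
          congr 1
          ext i j
          simp
        rw [← this]
        ext i j
        simp only [C, Matrix.map_apply, Matrix.smul_apply, star_smul, star_trivial]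
      rw [hstar, hB, Matrix.smul_mul, Matrix.mul_assoc, Matrix.mul_assoc,
        conjTranspose_mul_self_eq_smul_one_s13 hr hH, Matrix.mul_smul, Matrix.mul_one,
        Matrix.mul_smul, smul_smul, smul_smul, mul_assoc, inv_mul_cancel₀ hr, mul_one]
    refine ⟨C.map re, ?_⟩
    rw [ofRealMulTranspose_apply, ← hCH]
    congr 1
    ext i j
    simpa using (Complex.conj_eq_iff_re.mp (congrFun₂ hC i j))

lemma sum_ofRealMulTranspose_mul (hr : r ≠ 0) (hH : H * Hᴴ = r • 1) (A : Matrix ι ι ℝ)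
    (i' i j : ι) :
    ∑ s, ofRealMulTranspose H A i' s * ∑ l, H i l * star (H s l) * star (H j l) =
      r * ∑ l, (A i' l : ℂ) * (H i l * star (H j l)) := by
  have hA : ∀ l, ∑ s, ofRealMulTranspose H A i' s * star (H s l) = r * A i' l := fun l => by
    simpa [Matrix.mul_apply] using congrFun₂ (ofRealMulTranspose_mul_map_star hr hH A) i' l
  calc ∑ s, ofRealMulTranspose H A i' s * ∑ l, H i l * star (H s l) * star (H j l)
      = ∑ l, (∑ s, ofRealMulTranspose H A i' s * star (H s l)) * (H i l * star (H j l)) := by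
        simp only [Finset.mul_sum, Finset.sum_mul]
        rw [Finset.sum_comm]
        exact Finset.sum_congr rfl fun _ _ => Finset.sum_congr rfl fun _ _ => by ring
    _ = r * ∑ l, (A i' l : ℂ) * (H i l * star (H j l)) := by
        simp only [hA, Finset.mul_sum, mul_assoc]

lemma ofRealMulTranspose_forall_sum_mul_eq_iff_mem_defectSubmodule (hr : r ≠ 0) (hH : H * Hᴴ = r • 1)
    (A : Matrix ι ι ℝ) :
    (∀ i j, ∑ s, ofRealMulTranspose H A i s * ∑ l, H i l * star (H s l) * star (H j l) =
        ∑ s, ofRealMulTranspose H A j s * ∑ l, H i l * star (H s l) * star (H j l)) ↔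
      A ∈ defectSubmodule H := by
  refine forall₂_congr fun i j => ?_
  rw [sum_ofRealMulTranspose_mul hr hH, sum_ofRealMulTranspose_mul hr hH,
    mul_right_inj' (ofReal_ne_zero.mpr hr), ← sub_eq_zero, ← Finset.sum_sub_distrib]
  exact Iff.of_eq (congrArg (· = 0) (Finset.sum_congr rfl fun k _ => by ring))

end OfRealMulTranspose

theorem masterSpace_eq_map_defectSubmodule {N : ℕ} (hN : N ≠ 0) {H : Matrix (Fin N) (Fin N) ℂ}
    (hH : H * Hᴴ = (N : ℝ) • 1) :
    masterSpace N (H.map star * Hᴴ) (fun s i j => ∑ l, H i l * star (H s l) * star (H j l)) =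
      (defectSubmodule H).map (ofRealMulTranspose H) := by
  have hr : (N : ℝ) ≠ 0 := Nat.cast_ne_zero.mpr hN
  have hconj (B : Matrix (Fin N) (Fin N) ℂ) :
      (∀ i j, star (B i j) = 1 / (N : ℂ) * (B * (H.map star * Hᴴ)) i j) ↔
        B ∈ LinearMap.range (ofRealMulTranspose H) := by
    rw [mem_range_ofRealMulTranspose_iff hr hH, ← Matrix.ext_iff]
    simp [Complex.real_smul]
  ext B
  constructor
  · rintro ⟨hstar, hbal⟩
    obtain ⟨A, rfl⟩ := (hconj B).mp hstar
    exact ⟨A, (ofRealMulTranspose_forall_sum_mul_eq_iff_mem_defectSubmodule hr hH A).mp hbal, rfl⟩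
  · rintro ⟨A, hA, rfl⟩
    exact ⟨(hconj _).mpr ⟨A, rfl⟩,
      (ofRealMulTranspose_forall_sum_mul_eq_iff_mem_defectSubmodule hr hH A).mpr hA⟩

theorem defect_eq_finrank_masterSpace {N : ℕ} (hN : N ≠ 0) {H : Matrix (Fin N) (Fin N) ℂ}
    (hH : H * Hᴴ = (N : ℝ) • 1) :
    defect H = Module.finrank ℝ
      (masterSpace N (H.map star * Hᴴ) (fun s i j => ∑ l, H i l * star (H s l) * star (H j l))) := by
  rw [masterSpace_eq_map_defectSubmodule hN hH]
  exact (Submodule.equivMapOfInjective _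
    (ofRealMulTranspose_injective (Nat.cast_ne_zero.mpr hN) hH) _).finrank_eq

section Master

variable {ι : Type*} [Fintype ι] {m n : ι → ℝ} {H : Matrix ι ι ℂ}

lemma star_exp_I_mul_ofReal_mul_ofReal (a b : ℝ) :
    star (exp (I * a * b)) = exp (-I * a * b) := by
  rw [Complex.star_def, ← Complex.exp_conj]
  simp

lemma of_sum_exp_eq_map_star_mul_conjTranspose (hH : ∀ j k, H j k = exp (I * m j * n k)) :
    Matrix.of (fun i j => ∑ k, exp (-I * ((m i : ℂ) + m j) * n k)) = H.map star * Hᴴ := by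
  ext i j
  simp only [Matrix.of_apply, Matrix.mul_apply, Matrix.map_apply, Matrix.conjTranspose_apply,
    hH, star_exp_I_mul_ofReal_mul_ofReal, ← Complex.exp_add]
  exact Finset.sum_congr rfl fun k _ => congrArg exp (by ring)

lemma sum_exp_eq_sum_mul_star_mul_star (hH : ∀ j k, H j k = exp (I * m j * n k)) :
    (fun s i j => ∑ l, exp (I * ((m i : ℂ) - m s - m j) * n l)) =
      fun s i j => ∑ l, H i l * star (H s l) * star (H j l) := by
  funext s i j
  simp only [hH, star_exp_I_mul_ofReal_mul_ofReal, ← Complex.exp_add]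
  exact Finset.sum_congr rfl fun l _ => congrArg exp (by ring)

end Master

/-- for a master Hadamard matrix `H_{jk} = e^{i m_j n_k}`, the defect of
`H` equals the real dimension of `{B : conj(B) = (1/N) B L, (BR)_{i,ij} = (BR)_{j,ij}}`,
where `L_{ij} = ∑_k e^{−i(m_i+m_j) n_k}` and `R_{s,(i,j)} = ∑_l e^{i(m_i−m_s−m_j) n_l}`. -/
theorem stmt_13 (N : ℕ) (hN : 1 ≤ N) (m n : Fin N → ℝ)
    (H : Matrix (Fin N) (Fin N) ℂ)
    (hH : ∀ j k, H j k = Complex.exp (Complex.I * (m j) * (n k)))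
    (horth : ∀ i j : Fin N, ∑ k, H i k * star (H j k) = if i = j then (N : ℂ) else 0) :
    defect H = Module.finrank ℝ
      (masterSpace N
        (Matrix.of fun i j => ∑ k, Complex.exp (-Complex.I * ((m i) + (m j)) * (n k)))
        (fun s i j => ∑ l, Complex.exp (Complex.I * ((m i) - (m s) - (m j)) * (n l)))) := by
  have hHH : H * Hᴴ = (N : ℝ) • 1 := by
    ext i j
    rw [Matrix.mul_apply]
    simp only [Matrix.conjTranspose_apply, horth, Matrix.smul_apply, Matrix.one_apply]
    split_ifs <;> simp
  rw [of_sum_exp_eq_map_star_mul_conjTranspose hH, sum_exp_eq_sum_mul_star_mul_star hH]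
  exact defect_eq_finrank_masterSpace (by omega) hHH
end

section
/- Let K ∈ M_{M×N}(ℂ) be a partial complex Hadamard matrix, let Q ≥ 1, and let L_1,…,L_M ∈ M_Q(ℂ) and R_1,…,R_N ∈ M_Q(ℂ) be matrices satisfying L_i·L_i* = Q·1_Q and R_j·R_j* = Q·1_Q for all i,j, such that for every 1 ≤ i ≤ M and 1 ≤ j ≤ N all entries of the matrix (1/√Q)·L_i*·R_j have modulus 1. Then the matrix H ∈ M_{MQ×NQ}(ℂ), defined on pairs of indices by H_{(i,a),(j,b)} = (1/√Q)·K_{ij}·(L_i*·R_j)_{ab}, is a partial complex Hadamard matrix. -/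
/-!
Grouping the columns of `H` by block, the inner product of rows `(i, a)` and `(i', a')` is
`∑ⱼ K i j * conj (K i' j) * (Bᵢⱼ Bᵢ'ⱼᴴ) a a'` with `Bᵢⱼ = Q^{-1/2} Lᵢᴴ Rⱼ`. Since `Rⱼ Rⱼᴴ = Q`,
the block product `Bᵢⱼ Bᵢ'ⱼᴴ = Lᵢᴴ Lᵢ'` does not depend on `j`, so the sum factors as
`(∑ⱼ K i j * conj (K i' j)) * (Lᵢᴴ Lᵢ') a a'`. The first factor vanishes unless `i = i'`, and
then `Lᵢᴴ Lᵢ = Q` gives `N Q δ_{a a'}`.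
-/

open Matrix

namespace Matrix

variable {m n p q α : Type*}

theorem conjTranspose_mul_self_eq_smul_one_of_mul_conjTranspose [Fintype n] [DecidableEq n]
    [Field α] [StarRing α] {A : Matrix n n α} {c : α} (hc : c ≠ 0) (h : A * Aᴴ = c • 1) :
    Aᴴ * A = c • 1 := by
  have hinv : A * (c⁻¹ • Aᴴ) = 1 := by
    rw [Matrix.mul_smul, h, smul_smul, inv_mul_cancel₀ hc, one_smul]
  calc Aᴴ * A = c • (c⁻¹ • Aᴴ * A) := by rw [smul_mul, smul_smul, mul_inv_cancel₀ hc, one_smul]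
    _ = c • 1 := by rw [mul_eq_one_comm.mp hinv]

theorem mul_mul_conjTranspose_mul_eq_smul [Fintype n] [Fintype q]
    [DecidableEq n] [CommSemiring α] [StarRing α] (A : Matrix m n α) (B : Matrix p n α)
    {R : Matrix n q α} {c : α} (hR : R * Rᴴ = c • 1) :
    A * R * (B * R)ᴴ = c • (A * Bᴴ) := by
  rw [conjTranspose_mul, Matrix.mul_assoc, ← Matrix.mul_assoc R, hR, smul_mul, Matrix.one_mul,
    Matrix.mul_smul]

theorem sum_mul_star_of_apply_eq_mul [Fintype n] [Fintype q] [CommSemiring α] [StarRing α]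
    {H : Matrix (m × p) (n × q) α} (K : Matrix m n α) (B : m → n → Matrix p q α)
    (hH : ∀ i a j b, H (i, a) (j, b) = K i j * B i j a b) (i i' : m) (a a' : p) :
    ∑ z, H (i, a) z * star (H (i', a') z) =
      ∑ j, K i j * star (K i' j) * (B i j * (B i' j)ᴴ) a a' := by
  rw [Fintype.sum_prod_type]
  refine Finset.sum_congr rfl fun j _ => ?_
  simp only [hH, mul_apply, conjTranspose_apply, star_mul', Finset.mul_sum]
  exact Finset.sum_congr rfl fun b _ => by ring

end Matrix

/-- McNulty–Weigert construction: if `K ∈ M_{M×N}(ℂ)` is partial Hadamard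
and `L_1,…,L_M, R_1,…,R_N ∈ √Q·U_Q` are such that each `(1/√Q)·L_i*·R_j` has unit-modulus
entries, then `H_{(i,a),(j,b)} = (1/√Q)·K_{ij}·(L_i*·R_j)_{ab}` is partial Hadamard. -/
theorem stmt_14 (M N Q : ℕ) (hQ : 1 ≤ Q)
    (K : Matrix (Fin M) (Fin N) ℂ)
    (hKmod : ∀ i j, ‖K i j‖ = 1)
    (hKorth : ∀ i j : Fin M, ∑ k, K i k * star (K j k) = if i = j then (N : ℂ) else 0)
    (L : Fin M → Matrix (Fin Q) (Fin Q) ℂ)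
    (R : Fin N → Matrix (Fin Q) (Fin Q) ℂ)
    (hL : ∀ i, L i * (L i).conjTranspose = (Q : ℂ) • (1 : Matrix (Fin Q) (Fin Q) ℂ))
    (hR : ∀ j, R j * (R j).conjTranspose = (Q : ℂ) • (1 : Matrix (Fin Q) (Fin Q) ℂ))
    (hmod : ∀ (i : Fin M) (j : Fin N) (a b : Fin Q),
      ‖(1 / (Real.sqrt Q : ℂ)) * ((L i).conjTranspose * R j) a b‖ = 1)
    (H : Matrix (Fin M × Fin Q) (Fin N × Fin Q) ℂ)
    (hH : ∀ (i : Fin M) (a : Fin Q) (j : Fin N) (b : Fin Q),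
      H (i, a) (j, b) = (1 / (Real.sqrt Q : ℂ)) * K i j * ((L i).conjTranspose * R j) a b) :
    (∀ (x : Fin M × Fin Q) (y : Fin N × Fin Q), ‖H x y‖ = 1) ∧
    (∀ x y : Fin M × Fin Q,
      ∑ z : Fin N × Fin Q, H x z * star (H y z) =
        if x = y then ((N * Q : ℕ) : ℂ) else 0) := by
  have hQ0 : (Q : ℂ) ≠ 0 := by exact_mod_cast (by omega : Q ≠ 0)
  set c : ℂ := 1 / (Real.sqrt Q : ℂ)
  have hc : c * star c * Q = 1 := by
    have hsq : (Real.sqrt Q : ℂ) * Real.sqrt Q = Q := by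
      exact_mod_cast Real.mul_self_sqrt (Nat.cast_nonneg Q)
    simp only [c, star_div₀, star_one, Complex.star_def, Complex.conj_ofReal]
    rw [div_mul_div_comm, one_mul, hsq, one_div, inv_mul_cancel₀ hQ0]
  have hH' : ∀ i a j b, H (i, a) (j, b) = K i j * (c • ((L i)ᴴ * R j)) a b := by
    intro i a j b
    rw [hH, Matrix.smul_apply, smul_eq_mul]
    ring
  refine ⟨?_, ?_⟩
  · rintro ⟨i, a⟩ ⟨j, b⟩
    rw [hH', norm_mul, hKmod, Matrix.smul_apply, smul_eq_mul, hmod, one_mul]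
  · rintro ⟨i, a⟩ ⟨i', a'⟩
    have hblock : ∀ j, c • ((L i)ᴴ * R j) * (c • ((L i')ᴴ * R j))ᴴ = (L i)ᴴ * L i' := fun j => by
      rw [conjTranspose_smul, smul_mul_smul_comm,
        mul_mul_conjTranspose_mul_eq_smul _ _ (hR j), smul_smul, hc, one_smul,
        conjTranspose_conjTranspose]
    rw [sum_mul_star_of_apply_eq_mul K _ hH' i i' a a']
    simp only [hblock, ← Finset.sum_mul, hKorth]
    obtain rfl | hii := eq_or_ne i i'
    · rw [conjTranspose_mul_self_eq_smul_one_of_mul_conjTranspose hQ0 (hL i)]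
      by_cases haa : a = a' <;> simp [haa]
    · simp [hii]
end

section
/- Let q ≥ 3 be a prime and let S = {s_1,…,s_M} and T = {t_1,…,t_N} be disjoint subsets of {0,1,…,q−1}. For k ∈ ℤ/qℤ with k ≠ 0, let V^k ∈ ℂ^{ℤ/qℤ} be given by V^k_i = (1/√q)·∑_{c∈ℤ/qℤ} w^{k·c(c−1)/2 + i·c}, where w = e^{2πi/q} and the exponent is computed in ℤ/qℤ. If K ∈ M_{M×N}(ℂ) is a partial complex Hadamard matrix, then the matrix H ∈ M_{Mq×Nq}(ℂ), defined on pairs of indices (1 ≤ i ≤ M, 1 ≤ j ≤ N, a,b ∈ ℤ/qℤ) by H_{(i,a),(j,b)} = K_{ij}·V^{t_j − s_i}_{b−a}, is a partial complex Hadamard matrix. -/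
/-!
For `k ≠ 0` the phase `c ↦ k c(c-1)/2 + i c` has polarization `(d, u) ↦ k d u`, which is
nondegenerate; expanding `|∑_c w^(phase c)|²` and substituting `c = d + u`, the sum over `d` is a
character sum vanishing unless `u = 0`, so `|V^k_i|² = 1`.

For orthogonality, `b ↦ V^k_{b-a}` is (up to `1/√q`) the Fourier transform of
`c ↦ w^(k c(c-1)/2 - a c)`, so by Parseval the inner product of the blocks of rows `(i, a)` and
`(i', a')` against column block `j` is `∑_c w^((s_{i'} - s_i) c(c-1)/2 + (a' - a) c)`. The `t_j`
cancel, so this factor does not depend on `j` and pulls out of the sum over `j`, leaving the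
orthogonality of the rows of `K`. For `i = i'` the quadratic term disappears and the remaining
linear character sum is `q δ_{a a'}`.
-/

open Finset ComplexConjugate

namespace AddChar

section Ring

variable {R : Type*} [CommRing R] [Fintype R] [DecidableEq R] {ψ : AddChar R ℂ}

theorem sum_fourier_mul_conj_fourier (hψ : ψ.IsPrimitive) (φ χ : R → ℂ) :
    ∑ b, (∑ c, φ c * ψ (b * c)) * conj (∑ d, χ d * ψ (b * d)) =
      Fintype.card R * ∑ c, φ c * conj (χ c) := by
  have hchar : ∀ b c d, ψ (b * c) * conj (ψ (b * d)) = ψ (b * (c - d)) := by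
    intro b c d
    rw [← map_neg_eq_conj, ← map_add_eq_mul, mul_sub, sub_eq_add_neg]
  calc ∑ b, (∑ c, φ c * ψ (b * c)) * conj (∑ d, χ d * ψ (b * d))
      = ∑ c, ∑ d, φ c * conj (χ d) * ∑ b, ψ (b * (c - d)) := by
        simp_rw [map_sum, map_mul, sum_mul_sum, mul_sum]
        rw [sum_comm]
        refine sum_congr rfl fun c _ => ?_
        rw [sum_comm]
        refine sum_congr rfl fun d _ => sum_congr rfl fun b _ => ?_
        rw [← hchar]
        ring
    _ = Fintype.card R * ∑ c, φ c * conj (χ c) := by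
        simp only [sum_mulShift _ hψ, sub_eq_zero, Nat.cast_ite, Nat.cast_zero, mul_ite, mul_zero,
          sum_ite_eq, mem_univ, if_true, mul_sum]
        exact sum_congr rfl fun c _ => mul_comm _ _

end Ring

section Field

variable {F : Type*} [Field F] [Fintype F] [DecidableEq F] {ψ : AddChar F ℂ}

theorem norm_sum_apply_eq_sqrt_card (hψ : ψ.IsPrimitive) {g : F → F} {k : F} (hk : k ≠ 0)
    (hg : ∀ d u, g (d + u) = g d + k * d * u + g u) :
    ‖∑ c, ψ (g c)‖ = √(Fintype.card F) := by
  have hg0 : g 0 = 0 := by simpa using hg 0 0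
  have hsq : (∑ c, ψ (g c)) * conj (∑ c, ψ (g c)) = Fintype.card F :=
    calc (∑ c, ψ (g c)) * conj (∑ c, ψ (g c))
        = ∑ d, ∑ u, ψ (g (d + u)) * conj (ψ (g d)) := by
          rw [map_sum, sum_mul_sum, sum_comm]
          exact sum_congr rfl fun d _ =>
            (Equiv.sum_comp (Equiv.addLeft d) fun c => ψ (g c) * conj (ψ (g d))).symm
      _ = ∑ u, ψ (g u) * ∑ d, ψ (d * (k * u)) := by
          rw [sum_comm]
          refine sum_congr rfl fun u _ => ?_
          rw [mul_sum]
          refine sum_congr rfl fun d _ => ?_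
          rw [← map_neg_eq_conj, ← map_add_eq_mul, ← map_add_eq_mul, hg]
          congr 1
          ring
      _ = Fintype.card F := by
          simp [sum_mulShift _ hψ, hk, hg0]
  have hnorm : ‖∑ c, ψ (g c)‖ ^ 2 = Fintype.card F := by
    exact_mod_cast (Complex.mul_conj' _).symm.trans hsq
  rw [← hnorm, Real.sqrt_sq (norm_nonneg _)]

end Field

end AddChar

section QuadPhase

variable {F : Type*} [Field F]

def quadPhase (k c : F) : F := k * c * (c - 1) * 2⁻¹

theorem quadPhase_add (h2 : (2 : F) ≠ 0) (k d u : F) :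
    quadPhase k (d + u) = quadPhase k d + k * d * u + quadPhase k u := by
  unfold quadPhase
  field_simp
  ring

theorem quadPhase_sub_left (k k' c : F) :
    quadPhase k c - quadPhase k' c = quadPhase (k - k') c := by
  unfold quadPhase
  ring

@[simp]
theorem quadPhase_zero_left (c : F) : quadPhase 0 c = 0 := by
  simp [quadPhase]

end QuadPhase

namespace ZMod

variable {q : ℕ} [Fact q.Prime]

theorem exp_pow_val_eq_stdAddChar (j : ZMod q) :
    Complex.exp (2 * Real.pi * Complex.I / q) ^ j.val = stdAddChar j := by
  rw [stdAddChar_apply, toCircle_apply, ← Complex.exp_nat_mul]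
  congr 1
  ring

noncomputable def chirpVector (k i : ZMod q) : ℂ :=
  ((Real.sqrt q)⁻¹ : ℂ) * ∑ c : ZMod q, stdAddChar (quadPhase k c + i * c)

theorem norm_chirpVector (hq : q ≠ 2) {k : ZMod q} (hk : k ≠ 0) (i : ZMod q) :
    ‖chirpVector k i‖ = 1 := by
  have h2 : (2 : ZMod q) ≠ 0 := Ring.two_ne_zero (by rwa [ringChar_zmod_n])
  have hq0 : (0 : ℝ) < q := by exact_mod_cast (Fact.out : q.Prime).pos
  rw [chirpVector, norm_mul, AddChar.norm_sum_apply_eq_sqrt_card (isPrimitive_stdAddChar q) hk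
    fun d u => by rw [quadPhase_add h2]; ring, ZMod.card, norm_inv, Complex.norm_real,
    Real.norm_of_nonneg (Real.sqrt_nonneg _), inv_mul_cancel₀ (Real.sqrt_pos.2 hq0).ne']

theorem chirpVector_sub (k b a : ZMod q) :
    chirpVector k (b - a) =
      ((Real.sqrt q)⁻¹ : ℂ) * ∑ c, stdAddChar (quadPhase k c - a * c) * stdAddChar (b * c) := by
  simp_rw [chirpVector, ← AddChar.map_add_eq_mul]
  congr 2 with c
  exact congrArg _ (by ring)

theorem sum_chirpVector_mul_conj (k k' a a' : ZMod q) :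
    ∑ b, chirpVector k (b - a) * conj (chirpVector k' (b - a')) =
      ∑ c, stdAddChar (quadPhase (k - k') c + (a' - a) * c) := by
  have hscale : ((Real.sqrt q : ℂ))⁻¹ * conj ((Real.sqrt q : ℂ))⁻¹ = (q : ℂ)⁻¹ := by
    rw [map_inv₀, Complex.conj_ofReal, ← mul_inv, ← Complex.ofReal_mul,
      Real.mul_self_sqrt (Nat.cast_nonneg q), Complex.ofReal_natCast]
  have hq : (q : ℂ) ≠ 0 := Nat.cast_ne_zero.2 (Fact.out : q.Prime).ne_zero
  simp_rw [chirpVector_sub, map_mul, mul_mul_mul_comm ((Real.sqrt q : ℂ))⁻¹, hscale, ← mul_sum,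
    AddChar.sum_fourier_mul_conj_fourier (isPrimitive_stdAddChar q), ZMod.card, ← mul_assoc,
    inv_mul_cancel₀ hq, one_mul, ← AddChar.map_neg_eq_conj, ← AddChar.map_add_eq_mul,
    ← quadPhase_sub_left]
  congr 1 with c
  exact congrArg _ (by ring)

end ZMod

theorem stmt_17_general (q : ℕ) [Fact (Nat.Prime q)] (hq3 : 3 ≤ q)
    (M N : ℕ) (s : Fin M → ZMod q) (t : Fin N → ZMod q)
    (hst : ∀ i j, s i ≠ t j)
    (w : ℂ) (hw : w = Complex.exp (2 * Real.pi * Complex.I / q))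
    (V : ZMod q → ZMod q → ℂ)
    (hV : ∀ k i : ZMod q,
      V k i = ((Real.sqrt q)⁻¹ : ℂ) *
        ∑ c : ZMod q, w ^ (k * c * (c - 1) * (2 : ZMod q)⁻¹ + i * c).val)
    (K : Matrix (Fin M) (Fin N) ℂ)
    (hKmod : ∀ i j, ‖K i j‖ = 1)
    (hKorth : ∀ i j : Fin M, ∑ l, K i l * star (K j l) = if i = j then (N : ℂ) else 0)
    (H : Matrix (Fin M × ZMod q) (Fin N × ZMod q) ℂ)
    (hH : ∀ (i : Fin M) (a : ZMod q) (j : Fin N) (b : ZMod q),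
      H (i, a) (j, b) = K i j * V (t j - s i) (b - a)) :
    (∀ (x : Fin M × ZMod q) (y : Fin N × ZMod q), ‖H x y‖ = 1) ∧
    (∀ x y : Fin M × ZMod q,
      ∑ z : Fin N × ZMod q, H x z * star (H y z) =
        if x = y then ((N * q : ℕ) : ℂ) else 0) := by
  have hVc : V = ZMod.chirpVector := by
    funext k i
    simp_rw [hV, hw, ZMod.exp_pow_val_eq_stdAddChar, ZMod.chirpVector, quadPhase]
  subst hVc
  refine ⟨fun ⟨i, a⟩ ⟨j, b⟩ => ?_, fun ⟨i, a⟩ ⟨i', a'⟩ => ?_⟩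
  · rw [hH, norm_mul, hKmod,
      ZMod.norm_chirpVector (by omega) (sub_ne_zero.2 (hst i j).symm), one_mul]
  have hrow : ∀ j, ∑ b, H (i, a) (j, b) * star (H (i', a') (j, b)) =
      K i j * star (K i' j) * ∑ c, ZMod.stdAddChar (quadPhase (s i' - s i) c + (a' - a) * c) := by
    intro j
    simp_rw [hH, star_mul', mul_mul_mul_comm (K i j), ← mul_sum, Complex.star_def,
      ZMod.sum_chirpVector_mul_conj, sub_sub_sub_cancel_left]
  rw [Fintype.sum_prod_type]
  simp_rw [hrow, ← sum_mul, hKorth, Prod.mk.injEq]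
  by_cases hi : i = i'
  · subst hi
    have hG : ∑ c, ZMod.stdAddChar (quadPhase (s i - s i) c + (a' - a) * c) =
        if a = a' then (q : ℂ) else 0 := by
      simp_rw [sub_self, quadPhase_zero_left, zero_add, mul_comm (a' - a),
        AddChar.sum_mulShift _ (ZMod.isPrimitive_stdAddChar q), sub_eq_zero, eq_comm (a := a'),
        ZMod.card, Nat.cast_ite, Nat.cast_zero]
    rw [hG]
    simp only [if_true, true_and, mul_ite, mul_zero, Nat.cast_mul]
  · simp [hi]

/-- for a prime `q ≥ 3`, disjoint sets `S = {s_1,…,s_M}`,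
`T = {t_1,…,t_N}` in `ℤ/q`, and a partial complex Hadamard matrix `K ∈ M_{M×N}(ℂ)`,
the matrix `H_{(i,a),(j,b)} = K_{ij}·V^{t_j−s_i}_{b−a}` is partial complex Hadamard,
where `V^k_i = (1/√q) ∑_c w^{k c(c−1)/2 + ic}` with `w = e^{2πi/q}`. -/
theorem stmt_17 (q : ℕ) [Fact (Nat.Prime q)] (hq3 : 3 ≤ q)
    (M N : ℕ) (s : Fin M → ZMod q) (t : Fin N → ZMod q)
    (hs : Function.Injective s) (ht : Function.Injective t)
    (hst : ∀ i j, s i ≠ t j)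
    (w : ℂ) (hw : w = Complex.exp (2 * Real.pi * Complex.I / q))
    (V : ZMod q → ZMod q → ℂ)
    (hV : ∀ k i : ZMod q,
      V k i = ((Real.sqrt q)⁻¹ : ℂ) *
        ∑ c : ZMod q, w ^ (k * c * (c - 1) * (2 : ZMod q)⁻¹ + i * c).val)
    (K : Matrix (Fin M) (Fin N) ℂ)
    (hKmod : ∀ i j, ‖K i j‖ = 1)
    (hKorth : ∀ i j : Fin M, ∑ l, K i l * star (K j l) = if i = j then (N : ℂ) else 0)
    (H : Matrix (Fin M × ZMod q) (Fin N × ZMod q) ℂ)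
    (hH : ∀ (i : Fin M) (a : ZMod q) (j : Fin N) (b : ZMod q),
      H (i, a) (j, b) = K i j * V (t j - s i) (b - a)) :
    (∀ (x : Fin M × ZMod q) (y : Fin N × ZMod q), ‖H x y‖ = 1) ∧
    (∀ x y : Fin M × ZMod q,
      ∑ z : Fin N × ZMod q, H x z * star (H y z) =
        if x = y then ((N * q : ℕ) : ℂ) else 0) :=
  stmt_17_general q hq3 M N s t hst w hw V hV K hKmod hKorth H hH
end

section
/- Let H ∈ M_{M×N}(ℂ) be a partial complex Hadamard matrix with rows H_1,…,H_M ∈ ℂ^N. For 1 ≤ i,j ≤ M let P_{ij} ∈ M_N(ℂ) be the orthogonal projection onto the line spanned by the vector H_i/H_j ∈ ℂ^N (whose k-th coordinate is H_{ik}·conj(H_{jk})), explicitly (P_{ij})_{kl} = (1/N)·H_{ik}·conj(H_{jk})·H_{jl}·conj(H_{il}). Then the matrix (P_{ij}) is submagic: each P_{ij} is a self-adjoint idempotent, and the projections are pairwise orthogonal along rows and columns, i.e. P_{ij}·P_{ik} = 0 whenever j ≠ k and P_{ij}·P_{kj} = 0 whenever i ≠ k. -/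
/-!
`P i j` is the orthogonal projection `x x* / ⟨x, x⟩` onto `x = H i * star (H j)`, so everything
reduces to inner products of such vectors. Since the entries of `H` are unimodular, a common
factor `H i` (resp. `star (H j)`) cancels in `⟨H i * star (H j), H i * star (H k)⟩` (resp.
`⟨H i * star (H j), H k * star (H j)⟩`), leaving the inner product of two rows of `H`, which
is `N` or `0` by row orthogonality.
-/

open Matrix

namespace Matrix

variable {n K : Type*} [Fintype n] [Field K] [StarRing K]

/-- The orthogonal projection onto the line through `x`; it is `0` when `star x ⬝ᵥ x = 0`,
through the junk value `0⁻¹ = 0`. -/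
def lineProj (x : n → K) : Matrix n n K :=
  (star x ⬝ᵥ x)⁻¹ • vecMulVec x (star x)

theorem lineProj_mul_lineProj (x y : n → K) :
    lineProj x * lineProj y =
      ((star x ⬝ᵥ x)⁻¹ * (star y ⬝ᵥ y)⁻¹ * (star x ⬝ᵥ y)) • vecMulVec x (star y) := by
  rw [lineProj, lineProj, smul_mul_smul_comm, vecMulVec_mul_vecMulVec, vecMulVec_smul,
    smul_smul]

theorem isHermitian_lineProj (x : n → K) : (lineProj x).IsHermitian := by
  rw [IsHermitian, lineProj, conjTranspose_smul, conjTranspose_vecMulVec, star_star, star_inv₀,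
    ← star_dotProduct]

theorem lineProj_mul_self (x : n → K) : lineProj x * lineProj x = lineProj x := by
  have h (c : K) : c⁻¹ * c⁻¹ * c = c⁻¹ := by simpa using mul_self_mul_inv c⁻¹
  rw [lineProj_mul_lineProj, h, lineProj]

theorem lineProj_mul_eq_zero {x y : n → K} (h : star x ⬝ᵥ y = 0) :
    lineProj x * lineProj y = 0 := by
  rw [lineProj_mul_lineProj, h, mul_zero, zero_smul]

end Matrix

section Unimodular

variable {n R : Type*} [Fintype n] [CommRing R] [StarRing R]

theorem star_mul_star_dotProduct_mul_star_of_left {u : n → R} (hu : ∀ k, star (u k) * u k = 1)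
    (v w : n → R) : star (u * star v) ⬝ᵥ (u * star w) = v ⬝ᵥ star w := by
  refine Finset.sum_congr rfl fun k _ => ?_
  simp only [Pi.mul_apply, Pi.star_apply, star_mul', star_star]
  linear_combination (v k * star (w k)) * hu k

theorem star_mul_star_dotProduct_mul_star_of_right {w : n → R} (hw : ∀ k, star (w k) * w k = 1)
    (u v : n → R) : star (u * star w) ⬝ᵥ (v * star w) = v ⬝ᵥ star u := by
  refine Finset.sum_congr rfl fun k _ => ?_
  simp only [Pi.mul_apply, Pi.star_apply, star_mul', star_star]
  linear_combination (v k * star (u k)) * hw k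

end Unimodular

/-- for a partial complex Hadamard matrix `H ∈ M_{M×N}(ℂ)`, the rank-one
projections `(P_{ij})_{kl} = (1/N)·H_{ik}·conj(H_{jk})·H_{jl}·conj(H_{il})` (projections
onto the vectors `H_i/H_j`) form a submagic matrix: each `P_{ij}` is a self-adjoint
idempotent, and the projections are pairwise orthogonal along rows and columns. -/
theorem stmt_18 (M N : ℕ)
    (H : Matrix (Fin M) (Fin N) ℂ)
    (hmod : ∀ i j, ‖H i j‖ = 1)
    (horth : ∀ i j : Fin M, ∑ k, H i k * star (H j k) = if i = j then (N : ℂ) else 0)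
    (P : Fin M → Fin M → Matrix (Fin N) (Fin N) ℂ)
    (hP : ∀ (i j : Fin M) (k l : Fin N),
      P i j k l = (1 / (N : ℂ)) * (H i k * star (H j k) * (H j l * star (H i l)))) :
    (∀ i j : Fin M, (P i j)ᴴ = P i j) ∧
    (∀ i j : Fin M, P i j * P i j = P i j) ∧
    (∀ i j k : Fin M, j ≠ k → P i j * P i k = 0) ∧
    (∀ i j k : Fin M, i ≠ k → P i j * P k j = 0) := by
  have hunit : ∀ i k, star (H i k) * H i k = 1 := fun i k => by
    rw [Complex.star_def, Complex.conj_mul', hmod]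
    norm_num
  have hnorm : ∀ i j, star (H i * star (H j)) ⬝ᵥ (H i * star (H j)) = N := fun i j => by
    rw [star_mul_star_dotProduct_mul_star_of_left (hunit i)]
    exact (horth j j).trans (if_pos rfl)
  have hPeq : ∀ i j, P i j = lineProj (H i * star (H j)) := fun i j => by
    rw [lineProj, hnorm]
    ext k l
    simp only [hP, Matrix.smul_apply, vecMulVec_apply, Pi.mul_apply, Pi.star_apply, star_mul',
      star_star, smul_eq_mul, one_div]
    ring
  simp only [hPeq]
  refine ⟨fun i j => isHermitian_lineProj _, fun i j => lineProj_mul_self _,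
    fun i j k hjk => lineProj_mul_eq_zero ?_, fun i j k hik => lineProj_mul_eq_zero ?_⟩
  · rw [star_mul_star_dotProduct_mul_star_of_left (hunit i)]
    exact (horth j k).trans (if_neg hjk)
  · rw [star_mul_star_dotProduct_mul_star_of_right (hunit j)]
    exact (horth k i).trans (if_neg (Ne.symm hik))
end

section
/- Let H ∈ M_{2×N}(ℂ) be a partial complex Hadamard matrix in dephased form, with first row (1,…,1) and second row λ = (λ_1,…,λ_N) where |λ_i| = 1 for all i (so that ∑_{i=1}^N λ_i = 0). For i,j ∈ {1,2} let P_{ij} ∈ M_N(ℂ) be the orthogonal projection onto the span of the vector H_i/H_j, explicitly (P_{ij})_{kl} = (1/N)·H_{ik}·conj(H_{jk})·H_{jl}·conj(H_{il}). Then the four projections P_{11}, P_{12}, P_{21}, P_{22} pairwise commute if and only if either (1) there exists w ∈ ℂ with |w| = 1 such that λ_i ∈ {w, −w} for every i, or (2) ∑_{i=1}^N λ_i² = 0. -/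
/-!
Each `P i j` is `(1/N) • vecMulVec v (star v)` with `v = H_i/H_j ∈ {1, λ, conj λ}`. Since
`∑ λ_i = 0`, the vector `1` is orthogonal to `λ` and `conj λ`, so everything reduces to the
commutation of the rank-one matrices of `λ` and `conj λ`, which reads
`conj s · λ_k λ_l = s · conj (λ_k λ_l)` with `s = ∑ λ_i²`. If `s ≠ 0`, multiplying by the
unimodular `λ_k λ_l` gives `conj s · (λ_k λ_l)² = s` for all `k, l`, hence all `λ_k²`
coincide.
-/

open Matrix

namespace Matrix

variable {n R : Type*} [Fintype n] [CommRing R] [StarRing R]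

theorem vecMulVec_star_mul_vecMulVec_star (u v : n → R) :
    vecMulVec u (star u) * vecMulVec v (star v) = (star u ⬝ᵥ v) • vecMulVec u (star v) := by
  rw [vecMulVec_mul_vecMulVec, vecMulVec_smul]

theorem commute_vecMulVec_star_iff (u v : n → R) :
    Commute (vecMulVec u (star u)) (vecMulVec v (star v)) ↔
      (star u ⬝ᵥ v) • vecMulVec u (star v) = (star v ⬝ᵥ u) • vecMulVec v (star u) := by
  rw [Commute, SemiconjBy, vecMulVec_star_mul_vecMulVec_star, vecMulVec_star_mul_vecMulVec_star]

theorem commute_vecMulVec_star_of_star_dotProduct_eq_zero {u v : n → R}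
    (h : star u ⬝ᵥ v = 0) : Commute (vecMulVec u (star u)) (vecMulVec v (star v)) := by
  have h' : star v ⬝ᵥ u = 0 := by rw [star_dotProduct, h, star_zero]
  rw [commute_vecMulVec_star_iff, h, h', zero_smul, zero_smul]

end Matrix

theorem Commute.of_eq_or_eq_or_eq {M : Type*} [Mul M] {a b c x y : M} (hab : Commute a b)
    (hac : Commute a c) (hbc : Commute b c) (hx : x = a ∨ x = b ∨ x = c)
    (hy : y = a ∨ y = b ∨ y = c) : Commute x y := by
  rcases hx with rfl | rfl | rfl <;> rcases hy with rfl | rfl | rfl <;>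
    first | exact Commute.refl _ | assumption | exact Commute.symm ‹_›

theorem Complex.star_mul_sq_eq_of_star_mul_eq_mul_star {s z : ℂ} (hz : ‖z‖ = 1)
    (h : star s * z = s * star z) : star s * z ^ 2 = s := by
  have hz' : star z * z = 1 := by
    rw [Complex.star_def, Complex.conj_mul', hz]; norm_num
  linear_combination z * h + s * hz'

theorem forall_star_mul_eq_mul_star_iff {ι : Type*} [Fintype ι] (lam : ι → ℂ)
    (hmod : ∀ i, ‖lam i‖ = 1) :
    (∀ k l, star (∑ i, lam i ^ 2) * (lam k * lam l) =
        (∑ i, lam i ^ 2) * star (lam k * lam l)) ↔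
      (∃ w : ℂ, ‖w‖ = 1 ∧ ∀ i, lam i = w ∨ lam i = -w) ∨ ∑ i, lam i ^ 2 = 0 := by
  set s := ∑ i, lam i ^ 2 with hs
  constructor
  · intro h
    by_cases hs0 : s = 0
    · exact Or.inr hs0
    obtain ⟨k₀⟩ : Nonempty ι :=
      Finset.univ_nonempty_iff.mp (Finset.nonempty_of_sum_ne_zero hs0)
    have hk₀ : lam k₀ ≠ 0 := norm_ne_zero_iff.mp (by rw [hmod]; exact one_ne_zero)
    refine Or.inl ⟨lam k₀, hmod k₀, fun i => ?_⟩
    have hsq : (lam i * lam k₀) ^ 2 = (lam k₀ * lam k₀) ^ 2 := by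
      refine mul_left_cancel₀ (star_ne_zero.mpr hs0) ?_
      rw [Complex.star_mul_sq_eq_of_star_mul_eq_mul_star (by simp [hmod]) (h i k₀),
        Complex.star_mul_sq_eq_of_star_mul_eq_mul_star (by simp [hmod]) (h k₀ k₀)]
    rcases sq_eq_sq_iff_eq_or_eq_neg.mp hsq with h' | h'
    · exact Or.inl (mul_right_cancel₀ hk₀ h')
    · exact Or.inr (mul_right_cancel₀ hk₀ (by rw [h', neg_mul]))
  · rintro (⟨w, -, hw⟩ | hs0) k l
    · have hsw : s = Fintype.card ι * w ^ 2 := by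
        rw [hs, Finset.sum_congr rfl fun i _ => (sq_eq_sq_iff_eq_or_eq_neg.mpr (hw i)),
          Finset.sum_const, nsmul_eq_mul, Finset.card_univ]
      rcases hw k with hk | hk <;> rcases hw l with hl | hl <;>
        simp only [hsw, hk, hl, star_mul', star_pow, star_natCast, star_neg] <;> ring
    · simp [hs0]

theorem commute_vecMulVec_star_conj_iff {ι : Type*} [Fintype ι] (lam : ι → ℂ)
    (hmod : ∀ i, ‖lam i‖ = 1) :
    Commute (vecMulVec lam (star lam)) (vecMulVec (star lam) (star (star lam))) ↔
      (∃ w : ℂ, ‖w‖ = 1 ∧ ∀ i, lam i = w ∨ lam i = -w) ∨ ∑ i, lam i ^ 2 = 0 := by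
  rw [← forall_star_mul_eq_mul_star_iff lam hmod, commute_vecMulVec_star_iff, star_star,
    star_dotProduct_star, ← Matrix.ext_iff]
  simp only [Matrix.smul_apply, vecMulVec_apply, dotProduct, Pi.star_apply, smul_eq_mul,
    star_mul', sq]

/-- for a dephased `2×N` partial complex Hadamard matrix with rows
`(1,…,1)` and `λ = (λ_1,…,λ_N)`, the four projections
`(P_{ij})_{kl} = (1/N)·H_{ik}·conj(H_{jk})·H_{jl}·conj(H_{il})` pairwise commute
iff either `λ_i ∈ {w, −w}` for some fixed `w ∈ 𝕋`, or `∑_i λ_i² = 0`. -/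
theorem stmt_19 (N : ℕ)
    (lam : Fin N → ℂ)
    (hmod : ∀ i, ‖lam i‖ = 1)
    (H : Matrix (Fin 2) (Fin N) ℂ)
    (hH0 : ∀ k, H 0 k = 1)
    (hH1 : ∀ k, H 1 k = lam k)
    (horth : ∀ i j : Fin 2, ∑ k, H i k * star (H j k) = if i = j then (N : ℂ) else 0)
    (P : Fin 2 → Fin 2 → Matrix (Fin N) (Fin N) ℂ)
    (hP : ∀ (i j : Fin 2) (k l : Fin N),
      P i j k l = (1 / (N : ℂ)) * (H i k * star (H j k) * (H j l * star (H i l)))) :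
    (∀ i j k l : Fin 2, P i j * P k l = P k l * P i j) ↔
      ((∃ w : ℂ, ‖w‖ = 1 ∧ ∀ i, lam i = w ∨ lam i = -w) ∨
        ∑ i, (lam i) ^ 2 = 0) := by
  have hrow0 : H 0 = 1 := funext hH0
  have hrow1 : H 1 = lam := funext hH1
  have hunit : lam * star lam = 1 := funext fun k => by
    simp [Complex.mul_conj', hmod]
  have hPv : ∀ i j, P i j = (1 / (N : ℂ)) •
      vecMulVec (H i * star (H j)) (star (H i * star (H j))) := fun i j => by
    ext k l
    simp only [hP, Matrix.smul_apply, vecMulVec_apply, Pi.mul_apply, Pi.star_apply, star_mul',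
      star_star, smul_eq_mul]
    ring
  have horth₁ : star 1 ⬝ᵥ lam = 0 := by
    simpa [dotProduct, hH0, hH1, mul_comm] using horth 1 0
  have horth₂ : star 1 ⬝ᵥ star lam = 0 := by
    rw [star_dotProduct_star, dotProduct_comm, ← star_one, horth₁, star_zero]
  rw [← commute_vecMulVec_star_conj_iff lam hmod]
  constructor
  · intro h
    rcases eq_or_ne N 0 with rfl | hN
    · exact Subsingleton.elim _ _
    simpa [hPv, hrow0, hrow1, Commute, SemiconjBy, hN] using h 1 0 0 1
  · intro h i j k l
    have hcases : ∀ i j, P i j = (1 / (N : ℂ)) • vecMulVec 1 (star 1) ∨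
        P i j = (1 / (N : ℂ)) • vecMulVec lam (star lam) ∨
        P i j = (1 / (N : ℂ)) • vecMulVec (star lam) (star (star lam)) := by
      intro i j
      fin_cases i <;> fin_cases j <;> simp [hPv, hrow0, hrow1, hunit]
    refine Commute.of_eq_or_eq_or_eq ?_ ?_ ?_ (hcases i j) (hcases k l) |>.eq
    · exact ((commute_vecMulVec_star_of_star_dotProduct_eq_zero horth₁).smul_left _).smul_right _
    · exact ((commute_vecMulVec_star_of_star_dotProduct_eq_zero horth₂).smul_left _).smul_right _
    · exact (h.smul_left _).smul_right _
end
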